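/- arXiv:2210.07703 — 10 statements merged into one kernel-verified Lean document; each statement's English description precedes it below -/
import Mathlib

section
/- Let d ≥ 1 and let u be a random vector distributed according to the standard Gaussian measure N(0, I_d) on ℝ^d. Then for every real k ≥ 2, the k-th moment of the Euclidean norm satisfies E[‖u‖^k] ≤ (d + k)^{k/2}. -/
/-!
Since `y ^ p ≤ (T / e) ^ p * exp (p y / T)` for every `T > 0`, the moment `E[‖u‖^k]` is bounded by
an exponential moment `E[exp (t ‖u‖²)] = (1 - 2t)^(-d/2)`, which the independence of the
coordinates of `u` makes explicit. The choice `t = k / (2 (d + k))` gives `1 - 2t = (1 + k/d)⁻¹`, and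
`(1 + k/d)^(d/2) ≤ e^(k/2)` cancels the factor `e^(-k/2)`.
-/

open MeasureTheory ProbabilityTheory

/-- The standard Gaussian measure `N(0, I_d)` on `ℝ^d = EuclideanSpace ℝ (Fin d)`. -/
noncomputable def stdGaussian (d : ℕ) : Measure (EuclideanSpace ℝ (Fin d)) :=
  (Measure.pi fun _ : Fin d => gaussianReal 0 1).map
    (MeasurableEquiv.toLp 2 (Fin d → ℝ))

open Real
open scoped NNReal

lemma rpow_le_div_exp_one_rpow_mul_exp {y p T : ℝ} (hy : 0 ≤ y) (hp : 0 ≤ p) (hT : 0 < T) :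
    y ^ p ≤ (T / exp 1) ^ p * exp (p / T * y) := by
  have hx : y / T ≤ exp (y / T - 1) := by linarith [add_one_le_exp (y / T - 1)]
  calc y ^ p = (T / exp 1) ^ p * (exp 1 * (y / T)) ^ p := by
        rw [← mul_rpow (by positivity) (by positivity)]
        congr 1
        field_simp
    _ ≤ (T / exp 1) ^ p * (exp 1 * exp (y / T - 1)) ^ p := by gcongr
    _ = (T / exp 1) ^ p * exp (p / T * y) := by
        rw [← exp_add, add_sub_cancel, ← exp_mul]
        ring_nf

lemma integral_exp_mul_sq_gaussianReal {v : ℝ≥0} (hv : v ≠ 0) {t : ℝ} (ht : t * v < 1 / 2) :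
    ∫ x, exp (t * x ^ 2) ∂gaussianReal 0 v = (√(1 - 2 * t * v))⁻¹ := by
  have hb : 1 / (2 * v) - t = (1 - 2 * t * v) / (2 * v) := by field_simp
  calc ∫ x, exp (t * x ^ 2) ∂gaussianReal 0 v
      = ∫ x, (√(2 * π * v))⁻¹ * exp (-(1 / (2 * v) - t) * x ^ 2) := by
        rw [integral_gaussianReal_eq_integral_smul hv]
        congr with x
        rw [gaussianPDFReal, smul_eq_mul, mul_assoc, ← exp_add]
        congr 2
        ring
    _ = (√(1 - 2 * t * v))⁻¹ := by
        rw [integral_const_mul, integral_gaussian, hb, div_div_eq_mul_div,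
          sqrt_div' _ (by linarith), show π * (2 * v) = 2 * π * v by ring]
        field_simp

lemma integral_exp_mul_norm_sq_stdGaussian (d : ℕ) {t : ℝ} (ht : t < 1 / 2) :
    ∫ u, exp (t * ‖u‖ ^ 2) ∂_root_.stdGaussian d = (√(1 - 2 * t))⁻¹ ^ d := by
  rw [_root_.stdGaussian, integral_map_equiv]
  simp only [MeasurableEquiv.coe_toLp, EuclideanSpace.real_norm_sq_eq, Finset.mul_sum, exp_sum]
  rw [integral_fintype_prod_eq_pow (fun x : ℝ => exp (t * x ^ 2)), Fintype.card_fin,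
    integral_exp_mul_sq_gaussianReal one_ne_zero (by simpa using ht), NNReal.coe_one, mul_one]

lemma integrable_exp_mul_norm_sq_stdGaussian (d : ℕ) {t : ℝ} (ht : t < 1 / 2) :
    Integrable (fun u => exp (t * ‖u‖ ^ 2)) (_root_.stdGaussian d) :=
  .of_integral_ne_zero <| by
    have : 0 < 1 - 2 * t := by linarith
    rw [integral_exp_mul_norm_sq_stdGaussian d ht]
    positivity

lemma sqrt_one_add_div_pow_le_exp (n : ℕ) {k : ℝ} (hk : 0 ≤ k) :
    √(1 + k / n) ^ n ≤ exp (k / 2) := by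
  have h : (1 + k / n) ^ n ≤ exp k := by
    simpa [neg_div] using
      one_sub_div_pow_le_exp_neg (n := n) (t := -k) (by linarith [n.cast_nonneg (α := ℝ)])
  rw [← pow_le_pow_iff_left₀ (by positivity) (by positivity) two_ne_zero, ← pow_mul, mul_comm,
    pow_mul, sq_sqrt (by positivity), ← exp_nat_mul,
    show ((2 : ℕ) : ℝ) * (k / 2) = k by push_cast; ring]
  exact h

/-- For `u ∼ N(0, I_d)` on `ℝ^d` with `d ≥ 1` and any real `k ≥ 2`,
`E[‖u‖^k] ≤ (d + k)^(k/2)`. -/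
theorem gaussian_norm_moment_le (d : ℕ) (hd : 1 ≤ d) (k : ℝ) (hk : 2 ≤ k) :
    ∫ u, ‖u‖ ^ k ∂(stdGaussian d) ≤ ((d : ℝ) + k) ^ (k / 2) := by
  have hd0 : (0 : ℝ) < d := by exact_mod_cast hd
  set T : ℝ := d + k
  have hT : 0 < T := by positivity
  set t := k / 2 / T
  have h_one_sub : 1 - 2 * t = (1 + k / d)⁻¹ := by
    simp only [t, T]
    field_simp
    ring
  have ht : t < 1 / 2 := by
    have : 0 < 1 - 2 * t := by rw [h_one_sub]; positivity
    linarith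
  have h_pointwise (u : EuclideanSpace ℝ (Fin d)) :
      ‖u‖ ^ k ≤ (T / exp 1) ^ (k / 2) * exp (t * ‖u‖ ^ 2) := by
    calc ‖u‖ ^ k = (‖u‖ ^ 2) ^ (k / 2) := by rw [← rpow_natCast_mul (norm_nonneg u)]; ring_nf
      _ ≤ _ := rpow_le_div_exp_one_rpow_mul_exp (by positivity) (by positivity) hT
  calc ∫ u, ‖u‖ ^ k ∂stdGaussian d
      ≤ ∫ u, (T / exp 1) ^ (k / 2) * exp (t * ‖u‖ ^ 2) ∂stdGaussian d :=
        integral_mono_of_nonneg (ae_of_all _ fun u => by positivity)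
          ((integrable_exp_mul_norm_sq_stdGaussian d ht).const_mul _) (ae_of_all _ h_pointwise)
    _ = (T / exp 1) ^ (k / 2) * √(1 + k / d) ^ d := by
        rw [integral_const_mul, integral_exp_mul_norm_sq_stdGaussian d ht, h_one_sub, sqrt_inv,
          inv_inv]
    _ ≤ (T / exp 1) ^ (k / 2) * exp (k / 2) := by
        gcongr
        exact sqrt_one_add_div_pow_le_exp d (by linarith)
    _ = T ^ (k / 2) := by
        rw [div_rpow hT.le (exp_pos 1).le, exp_one_rpow]
        field_simp
end

section
/- Let f : ℝ^d → ℝ be differentiable with L-Lipschitz gradient (i.e. ‖∇f(x) − ∇f(y)‖ ≤ L‖x − y‖ for all x, y), and let ν > 0. Then the Gaussian smoothing f_ν is differentiable and its gradient ∇f_ν is Lipschitz continuous with some constant L_ν satisfying L_ν ≤ L; in particular ‖∇f_ν(x) − ∇f_ν(y)‖ ≤ L‖x − y‖ for all x, y ∈ ℝ^d. -/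
open MeasureTheory ProbabilityTheory

/-- The Gaussian smoothing `f_ν(x) = E_{u ∼ N(0,I_d)}[f(x + ν u)]`. -/
noncomputable def gaussianSmoothing (d : ℕ) (f : EuclideanSpace ℝ (Fin d) → ℝ) (ν : ℝ)
    (x : EuclideanSpace ℝ (Fin d)) : ℝ :=
  ∫ u, f (x + ν • u) ∂(stdGaussian d)

/-! Differentiating under the integral sign gives `∇f_ν(x) = E[∇f(x + νu)]`; the integrals
converge because a Lipschitz gradient grows at most linearly and `f` at most quadratically.
Averaging the pointwise bound `‖∇f(x + νu) - ∇f(y + νu)‖ ≤ L‖x - y‖` over `u` then gives the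
claim. Nothing Gaussian is needed beyond a finite second moment, so this works for any random
perturbation `ξ ∈ L²` in place of `νu`. -/

open scoped NNReal

theorem lipschitzWith_gradient_iff {𝕜 F : Type*} [RCLike 𝕜] [NormedAddCommGroup F]
    [InnerProductSpace 𝕜 F] [CompleteSpace F] {f : F → 𝕜} {K : ℝ≥0} :
    LipschitzWith K (gradient f) ↔ LipschitzWith K (fderiv 𝕜 f) :=
  (InnerProductSpace.toDual 𝕜 F).symm.isometry.lipschitzWith_iff K

section LipschitzDerivative

variable {E G : Type*} [NormedAddCommGroup E] [NormedAddCommGroup G] {K : ℝ≥0}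

theorem LipschitzWith.norm_le_norm_add_mul_norm_sub {g : E → G} (hg : LipschitzWith K g)
    (x z : E) : ‖g z‖ ≤ ‖g x‖ + K * ‖z - x‖ := by
  have := hg.dist_le_mul z x
  rw [dist_eq_norm, dist_eq_norm] at this
  linarith [norm_le_insert' (g z) (g x)]

variable [NormedSpace ℝ E] [NormedSpace ℝ G] {f : E → G}

theorem norm_sub_le_of_lipschitzWith_fderiv (hf : Differentiable ℝ f)
    (hf' : LipschitzWith K (fderiv ℝ f)) (x h : E) :
    ‖f (x + h) - f x‖ ≤ (‖fderiv ℝ f x‖ + K * ‖h‖) * ‖h‖ := by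
  have hmem : x + h ∈ Metric.closedBall x ‖h‖ := by simp
  simpa using (convex_closedBall x ‖h‖).norm_image_sub_le_of_norm_fderiv_le
    (fun z _ => hf z) (fun z hz => (hf'.norm_le_norm_add_mul_norm_sub x z).trans
      (by gcongr; rwa [Metric.mem_closedBall, dist_eq_norm] at hz))
    (Metric.mem_closedBall_self (norm_nonneg h)) hmem

end LipschitzDerivative

section RandomPerturbation

variable {Ω E G : Type*} [MeasurableSpace Ω] {μ : Measure Ω}
  [NormedAddCommGroup E] [NormedAddCommGroup G] {ξ : Ω → E} {K : ℝ≥0}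

theorem LipschitzWith.integrable_comp_add [IsFiniteMeasure μ] {g : E → G} (hg : LipschitzWith K g)
    (hξ : Integrable ξ μ) (x : E) : Integrable (fun ω => g (x + ξ ω)) μ := by
  refine Integrable.mono' ((integrable_const ‖g x‖).add (hξ.norm.const_mul K))
    (hg.continuous.comp_aestronglyMeasurable (hξ.1.const_add x)) (ae_of_all _ fun ω => ?_)
  simpa using hg.norm_le_norm_add_mul_norm_sub x (x + ξ ω)

variable [NormedSpace ℝ E] [NormedSpace ℝ G] {f : E → G}

theorem integrable_comp_add_of_lipschitzWith_fderiv [IsFiniteMeasure μ] (hf : Differentiable ℝ f)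
    (hf' : LipschitzWith K (fderiv ℝ f)) (hξ : MemLp ξ 2 μ) (x : E) :
    Integrable (fun ω => f (x + ξ ω)) μ := by
  have hξ₁ : Integrable ξ μ := hξ.integrable one_le_two
  have hξ₂ : Integrable (fun ω => ‖ξ ω‖ ^ 2) μ := hξ.integrable_norm_pow two_ne_zero
  refine Integrable.mono' (((integrable_const ‖f x‖).add
      (hξ₁.norm.const_mul ‖fderiv ℝ f x‖)).add (hξ₂.const_mul K))
    (hf.continuous.comp_aestronglyMeasurable (hξ₁.1.const_add x)) (ae_of_all _ fun ω => ?_)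
  have := norm_sub_le_of_lipschitzWith_fderiv hf hf' x (ξ ω)
  simp only [Pi.add_apply]
  nlinarith [norm_le_insert' (f (x + ξ ω)) (f x)]

theorem hasFDerivAt_integral_comp_add [IsFiniteMeasure μ] (hf : Differentiable ℝ f)
    (hf' : LipschitzWith K (fderiv ℝ f)) (hξ : MemLp ξ 2 μ) (x₀ : E) :
    HasFDerivAt (fun x => ∫ ω, f (x + ξ ω) ∂μ) (∫ ω, fderiv ℝ f (x₀ + ξ ω) ∂μ) x₀ := by
  have hξ₁ : Integrable ξ μ := hξ.integrable one_le_two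
  refine hasFDerivAt_integral_of_dominated_of_fderiv_le (Metric.ball_mem_nhds x₀ one_pos)
    (bound := fun ω => ‖fderiv ℝ f x₀‖ + K * (1 + ‖ξ ω‖))
    (Filter.Eventually.of_forall fun x =>
      hf.continuous.comp_aestronglyMeasurable (hξ₁.1.const_add x))
    (integrable_comp_add_of_lipschitzWith_fderiv hf hf' hξ x₀)
    (hf'.continuous.comp_aestronglyMeasurable (hξ₁.1.const_add x₀))
    (ae_of_all _ fun ω x hx => ?_)
    ((integrable_const _).add (((integrable_const 1).add hξ₁.norm).const_mul K))
    (ae_of_all _ fun ω x _ => (hasFDerivAt_comp_add_right (ξ ω)).2 (hf _).hasFDerivAt)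
  have hx' : ‖x - x₀‖ < 1 := by rwa [Metric.mem_ball, dist_eq_norm] at hx
  calc ‖fderiv ℝ f (x + ξ ω)‖ ≤ ‖fderiv ℝ f x₀‖ + K * ‖x + ξ ω - x₀‖ :=
        hf'.norm_le_norm_add_mul_norm_sub x₀ _
    _ ≤ ‖fderiv ℝ f x₀‖ + K * (1 + ‖ξ ω‖) := by
        gcongr
        rw [add_sub_right_comm]
        exact (norm_add_le _ _).trans (by linarith)

theorem lipschitzWith_fderiv_integral_comp_add [IsProbabilityMeasure μ]
    (hf : Differentiable ℝ f) (hf' : LipschitzWith K (fderiv ℝ f)) (hξ : MemLp ξ 2 μ) :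
    LipschitzWith K (fderiv ℝ fun x => ∫ ω, f (x + ξ ω) ∂μ) := by
  have hξ₁ : Integrable ξ μ := hξ.integrable one_le_two
  refine LipschitzWith.of_dist_le_mul fun x y => ?_
  rw [(hasFDerivAt_integral_comp_add hf hf' hξ x).fderiv,
    (hasFDerivAt_integral_comp_add hf hf' hξ y).fderiv, dist_eq_norm,
    ← integral_sub (hf'.integrable_comp_add hξ₁ x) (hf'.integrable_comp_add hξ₁ y)]
  refine (norm_integral_le_of_norm_le_const (C := K * dist x y)
    (ae_of_all _ fun ω => ?_)).trans_eq (by simp)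
  simpa [dist_eq_norm] using hf'.dist_le_mul (x + ξ ω) (y + ξ ω)

end RandomPerturbation

theorem stdGaussian_eq (d : ℕ) :
    _root_.stdGaussian d = ProbabilityTheory.stdGaussian (EuclideanSpace ℝ (Fin d)) :=
  map_pi_eq_stdGaussian

instance (d : ℕ) : IsGaussian (_root_.stdGaussian d) := by
  rw [stdGaussian_eq]; infer_instance

theorem gaussianSmoothing_gradient_lipschitz_general (d : ℕ) (L ν : ℝ) (hL : 0 < L)
    (f : EuclideanSpace ℝ (Fin d) → ℝ) (hf : Differentiable ℝ f)
    (hLip : ∀ x y, ‖gradient f x - gradient f y‖ ≤ L * ‖x - y‖) :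
    Differentiable ℝ (gaussianSmoothing d f ν) ∧
      ∀ x y, ‖gradient (gaussianSmoothing d f ν) x - gradient (gaussianSmoothing d f ν) y‖
        ≤ L * ‖x - y‖ := by
  have hf' : LipschitzWith L.toNNReal (fderiv ℝ f) :=
    lipschitzWith_gradient_iff.1 <| LipschitzWith.of_dist_le_mul fun x y => by
      simpa [dist_eq_norm, hL.le] using hLip x y
  have hξ : MemLp (fun u => ν • u) 2 (_root_.stdGaussian d) :=
    IsGaussian.memLp_two_id.const_smul ν
  have hsmooth : LipschitzWith L.toNNReal (gradient (gaussianSmoothing d f ν)) :=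
    lipschitzWith_gradient_iff.2 (lipschitzWith_fderiv_integral_comp_add hf hf' hξ)
  refine ⟨fun x => (hasFDerivAt_integral_comp_add hf hf' hξ x).differentiableAt, fun x y => ?_⟩
  simpa [dist_eq_norm, hL.le] using hsmooth.dist_le_mul x y

/-- If `f : ℝ^d → ℝ` is differentiable with `L`-Lipschitz gradient and
`ν > 0`, then the Gaussian smoothing `f_ν` is differentiable and its gradient is
`L_ν`-Lipschitz for some `L_ν ≤ L`; in particular
`‖∇f_ν(x) − ∇f_ν(y)‖ ≤ L ‖x − y‖` for all `x, y`. -/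
theorem gaussianSmoothing_gradient_lipschitz (d : ℕ) (L ν : ℝ) (hL : 0 < L) (hν : 0 < ν)
    (f : EuclideanSpace ℝ (Fin d) → ℝ) (hf : Differentiable ℝ f)
    (hLip : ∀ x y, ‖gradient f x - gradient f y‖ ≤ L * ‖x - y‖) :
    Differentiable ℝ (gaussianSmoothing d f ν) ∧
      ∀ x y, ‖gradient (gaussianSmoothing d f ν) x - gradient (gaussianSmoothing d f ν) y‖
        ≤ L * ‖x - y‖ :=
  gaussianSmoothing_gradient_lipschitz_general d L ν hL f hf hLip
end

section
/- Let f : ℝ^d → ℝ be differentiable with L-Lipschitz gradient and let ν > 0. Then for every x ∈ ℝ^d, (1/ν²) · E_u[(f(x + νu) − f(x))² · ‖u‖²] ≤ (ν²/2) · L² · (d + 6)³ + 2(d + 4) · ‖∇f(x)‖², where u is a standard Gaussian vector on ℝ^d. -/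
open MeasureTheory ProbabilityTheory

/-!
With `g = ∇f x`, the descent lemma `|f (x + v) - f x - ⟪g, v⟫| ≤ L/2 ‖v‖²` bounds
`(f (x + ν u) - f x)² ‖u‖²` pointwise by `ν⁴ L²/2 ‖u‖⁶ + 2 ν² ⟪g, u⟫² ‖u‖²`, so the claim
reduces to the Gaussian moments `E ‖u‖⁶ = d (d + 2) (d + 4) ≤ (d + 6)³` and
`E ⟪g, u⟫² ‖u‖² = (d + 2) ‖g‖²`. Both are computed in coordinates: after expanding into monomials
`u_i^a u_j^b u_k^c`, independence of the coordinates factors each expectation into the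
one-dimensional moments `0, 1, 3, 15` of orders `1, 2, 4, 6`; the even ones are `(2k - 1)‼`,
read off from the Gamma integral.
-/

open Real
open scoped RealInnerProductSpace

lemma integrable_pow_gaussianReal (n : ℕ) :
    Integrable (fun x : ℝ => x ^ n) (gaussianReal 0 1) :=
  (integrable_norm_iff (by fun_prop)).1 <| by
    simpa [norm_pow] using (memLp_id_gaussianReal n).integrable_norm_pow'

open scoped Nat in
lemma integral_pow_even_gaussianReal (k : ℕ) :
    ∫ x, x ^ (2 * k) ∂gaussianReal 0 1 = (2 * k - 1 : ℕ)‼ := by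
  have hdensity : ∫ x, x ^ (2 * k) ∂gaussianReal 0 1 =
      (√(2 * π))⁻¹ * ∫ x : ℝ, x ^ (2 * k) * exp (-x ^ 2 / 2) := by
    rw [integral_gaussianReal_eq_integral_smul one_ne_zero, ← integral_const_mul]
    congr with x
    simp [gaussianPDFReal_def]; ring
  have heven : ∫ x : ℝ, x ^ (2 * k) * exp (-x ^ 2 / 2) =
      2 * ∫ x in Set.Ioi (0 : ℝ), x ^ (2 * k) * exp (-x ^ 2 / 2) := by
    rw [← integral_comp_abs (f := fun x => x ^ (2 * k) * exp (-x ^ 2 / 2))]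
    simp only [(even_two_mul k).pow_abs, sq_abs]
  have hrpow : ∫ x in Set.Ioi (0 : ℝ), x ^ (2 * k) * exp (-x ^ 2 / 2) =
      ∫ x in Set.Ioi (0 : ℝ), x ^ ((2 * k : ℕ) : ℝ) * exp (-(1 / 2) * x ^ (2 : ℝ)) := by
    refine setIntegral_congr_fun measurableSet_Ioi fun x _ => ?_
    rw [rpow_natCast, rpow_two]; ring_nf
  have hΓ := integral_rpow_mul_exp_neg_mul_rpow (p := 2) (q := (2 * k : ℕ)) (b := 1 / 2)
    two_pos (neg_one_lt_zero.trans_le (by positivity)) (by norm_num)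
  have hpow : (1 / 2 : ℝ) ^ (-((2 * k : ℕ) + 1 : ℝ) / 2) = 2 ^ k * √2 := by
    rw [one_div, inv_rpow zero_le_two, ← rpow_neg zero_le_two, sqrt_eq_rpow, ← rpow_natCast,
      ← rpow_add two_pos]
    push_cast; ring_nf
  have hΓk : Gamma (((2 * k : ℕ) + 1 : ℝ) / 2) = (2 * k - 1 : ℕ)‼ * √π / 2 ^ k := by
    rw [← Gamma_nat_add_half]; push_cast; ring_nf
  rw [hdensity, heven, hrpow, hΓ, hpow, hΓk, sqrt_mul zero_le_two]
  field_simp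

lemma integral_sq_gaussianReal : ∫ x, x ^ 2 ∂gaussianReal 0 1 = 1 := by
  simpa using integral_pow_even_gaussianReal 1

lemma integral_pow_four_gaussianReal : ∫ x, x ^ 4 ∂gaussianReal 0 1 = 3 := by
  simpa [Nat.doubleFactorial] using integral_pow_even_gaussianReal 2

lemma integral_pow_six_gaussianReal : ∫ x, x ^ 6 ∂gaussianReal 0 1 = 15 := by
  simpa [Nat.doubleFactorial] using integral_pow_even_gaussianReal 3

section TripleSums

variable {ι : Type*} [Fintype ι]

lemma integrable_sum_sum_sum {Ω : Type*} [MeasurableSpace Ω] {μ : Measure Ω}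
    {f : ι → ι → ι → Ω → ℝ} (hf : ∀ i j k, Integrable (f i j k) μ) :
    Integrable (fun ω => ∑ i, ∑ j, ∑ k, f i j k ω) μ :=
  integrable_finsetSum _ fun i _ => integrable_finsetSum _ fun j _ =>
    integrable_finsetSum _ fun k _ => hf i j k

lemma integral_sum_sum_sum {Ω : Type*} [MeasurableSpace Ω] {μ : Measure Ω}
    {f : ι → ι → ι → Ω → ℝ} (hf : ∀ i j k, Integrable (f i j k) μ) :
    ∫ ω, ∑ i, ∑ j, ∑ k, f i j k ω ∂μ = ∑ i, ∑ j, ∑ k, ∫ ω, f i j k ω ∂μ := by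
  rw [integral_finsetSum _ fun i _ => integrable_finsetSum _ fun j _ =>
    integrable_finsetSum _ fun k _ => hf i j k]
  refine Finset.sum_congr rfl fun i _ => ?_
  rw [integral_finsetSum _ fun j _ => integrable_finsetSum _ fun k _ => hf i j k]
  exact Finset.sum_congr rfl fun j _ => integral_finsetSum _ fun k _ => hf i j k

lemma sum_sq_pow_three_eq (u : ι → ℝ) :
    (∑ i, u i ^ 2) ^ 3 = ∑ i, ∑ j, ∑ k, u i ^ 2 * u j ^ 2 * u k ^ 2 := by
  rw [pow_three, Finset.sum_mul_sum, Finset.sum_mul_sum]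
  simp only [Finset.mul_sum, mul_assoc]

-- The exponents `1` make every term an instance of the monomial lemmas below.
lemma sum_mul_sq_mul_sum_sq_eq (g u : ι → ℝ) :
    (∑ i, g i * u i) ^ 2 * ∑ k, u k ^ 2 =
      ∑ i, ∑ j, ∑ k, g j * g k * (u j ^ 1 * u k ^ 1 * u i ^ 2) := by
  rw [sq, Finset.sum_mul_sum]
  simp only [Finset.sum_mul, Finset.mul_sum]
  refine Finset.sum_congr rfl fun i _ => Finset.sum_congr rfl fun j _ =>
    Finset.sum_congr rfl fun k _ => by ring

end TripleSums

section IndependentCoordinates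

variable {ι : Type*} [Fintype ι] {m : Measure ℝ} [IsProbabilityMeasure m]

lemma iIndepFun_eval_pi : iIndepFun (fun i (u : ι → ℝ) => u i) (Measure.pi fun _ => m) :=
  iIndepFun_pi fun _ => aemeasurable_id

lemma integral_pi_mul_of_ne {f g : ℝ → ℝ} (hf : Measurable f) (hg : Measurable g) {i j : ι}
    (hij : i ≠ j) :
    ∫ u, f (u i) * g (u j) ∂Measure.pi (fun _ => m) = (∫ x, f x ∂m) * ∫ x, g x ∂m := by
  rw [(iIndepFun_eval_pi.indepFun hij).integral_fun_comp_mul_comp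
      (measurable_pi_apply i).aemeasurable (measurable_pi_apply j).aemeasurable
      (by simpa using hf.aestronglyMeasurable) (by simpa using hg.aestronglyMeasurable),
    integral_comp_eval hf.aestronglyMeasurable, integral_comp_eval hg.aestronglyMeasurable]

lemma integral_pi_mul_of_ne_of_ne {F : ℝ × ℝ → ℝ} (hF : Measurable F) {h : ℝ → ℝ}
    (hh : Measurable h) {i j k : ι} (hik : i ≠ k) (hjk : j ≠ k) :
    ∫ u, F (u i, u j) * h (u k) ∂Measure.pi (fun _ => m)
      = (∫ u, F (u i, u j) ∂Measure.pi (fun _ => m)) * ∫ x, h x ∂m := by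
  rw [(iIndepFun_eval_pi.indepFun_prodMk (fun _ => measurable_pi_apply _) i j k hik hjk
      ).integral_fun_comp_mul_comp
      ((measurable_pi_apply i).prodMk (measurable_pi_apply j)).aemeasurable
      (measurable_pi_apply k).aemeasurable hF.aestronglyMeasurable hh.aestronglyMeasurable,
    integral_comp_eval hh.aestronglyMeasurable]

end IndependentCoordinates

section GaussianCoordinates

variable {ι : Type*} [Fintype ι]

local notation "𝒩" => Measure.pi fun _ => gaussianReal 0 1

lemma integrable_pi_monomial (i j k : ι) (a b c : ℕ) :
    Integrable (fun u : ι → ℝ => u i ^ a * u j ^ b * u k ^ c) 𝒩 := by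
  classical
  have h : (fun u : ι → ℝ => u i ^ a * u j ^ b * u k ^ c) =
      fun u => ∏ l, u l ^ (Pi.single i a l + Pi.single j b l + Pi.single k c l) := by
    ext u
    simp only [pow_add, Finset.prod_mul_distrib, Pi.single_apply, pow_ite, pow_zero,
      Finset.prod_ite_eq', Finset.mem_univ, if_true]
  rw [h]
  exact Integrable.fintype_prod fun l => integrable_pow_gaussianReal _

lemma integral_pi_pow_mul_pow [DecidableEq ι] (i j : ι) (a b : ℕ) :
    ∫ u : ι → ℝ, u i ^ a * u j ^ b ∂𝒩 =
      if i = j then ∫ x, x ^ (a + b) ∂gaussianReal 0 1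
      else (∫ x, x ^ a ∂gaussianReal 0 1) * ∫ x, x ^ b ∂gaussianReal 0 1 := by
  split_ifs with hij
  · subst hij
    simp_rw [← pow_add]
    exact integral_comp_eval (f := fun x => x ^ (a + b)) (by fun_prop)
  · exact integral_pi_mul_of_ne (f := fun x => x ^ a) (g := fun x => x ^ b) (by fun_prop)
      (by fun_prop) hij

lemma integral_pi_pow_mul_pow_mul_pow [DecidableEq ι] (i j k : ι) (a b c : ℕ) :
    ∫ u : ι → ℝ, u i ^ a * u j ^ b * u k ^ c ∂𝒩 =
      if k = i then ∫ u : ι → ℝ, u i ^ (a + c) * u j ^ b ∂𝒩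
      else if k = j then ∫ u : ι → ℝ, u i ^ a * u j ^ (b + c) ∂𝒩
      else (∫ u : ι → ℝ, u i ^ a * u j ^ b ∂𝒩) * ∫ x, x ^ c ∂gaussianReal 0 1 := by
  split_ifs with hki hkj
  · subst hki; simp_rw [pow_add]; ring_nf
  · subst hkj; simp_rw [pow_add, mul_assoc]
  · exact integral_pi_mul_of_ne_of_ne (F := fun p => p.1 ^ a * p.2 ^ b) (h := fun x => x ^ c)
      (by fun_prop) (by fun_prop) (Ne.symm hki) (Ne.symm hkj)

lemma integral_pi_sq_mul_sq_mul_sq [DecidableEq ι] (i j k : ι) :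
    ∫ u : ι → ℝ, u i ^ 2 * u j ^ 2 * u k ^ 2 ∂𝒩 =
      1 + 2 * ((if i = j then 1 else 0) + (if i = k then 1 else 0) + (if j = k then 1 else 0))
        + 8 * (if i = j then 1 else 0) * (if i = k then 1 else 0) := by
  rw [integral_pi_pow_mul_pow_mul_pow]
  simp only [integral_pi_pow_mul_pow]
  split_ifs <;> subst_vars <;>
    simp_all [integral_sq_gaussianReal, integral_pow_four_gaussianReal,
      integral_pow_six_gaussianReal] <;> norm_num

lemma integral_pi_mul_mul_sq [DecidableEq ι] (i j k : ι) :
    ∫ u : ι → ℝ, u i ^ 1 * u j ^ 1 * u k ^ 2 ∂𝒩 =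
      if i = j then 1 + 2 * (if i = k then 1 else 0) else 0 := by
  rw [integral_pi_pow_mul_pow_mul_pow]
  simp only [integral_pi_pow_mul_pow]
  split_ifs <;> subst_vars <;>
    simp_all [integral_sq_gaussianReal, integral_pow_four_gaussianReal]
  norm_num

lemma integrable_pi_sum_sq_pow_three :
    Integrable (fun u : ι → ℝ => (∑ i, u i ^ 2) ^ 3) 𝒩 := by
  simp only [sum_sq_pow_three_eq]
  exact integrable_sum_sum_sum fun i j k => integrable_pi_monomial i j k 2 2 2

lemma integrable_pi_sum_mul_sq_mul_sum_sq (g : ι → ℝ) :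
    Integrable (fun u : ι → ℝ => (∑ i, g i * u i) ^ 2 * ∑ k, u k ^ 2) 𝒩 := by
  simp only [sum_mul_sq_mul_sum_sq_eq]
  exact integrable_sum_sum_sum fun i j k => (integrable_pi_monomial j k i 1 1 2).const_mul _

lemma integral_pi_sum_sq_pow_three :
    ∫ u : ι → ℝ, (∑ i, u i ^ 2) ^ 3 ∂𝒩 =
      Fintype.card ι * (Fintype.card ι + 2) * (Fintype.card ι + 4) := by
  classical
  simp only [sum_sq_pow_three_eq]
  rw [integral_sum_sum_sum fun i j k => integrable_pi_monomial i j k 2 2 2]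
  simp [integral_pi_sq_mul_sq_mul_sq, Finset.sum_add_distrib, ← Finset.mul_sum]
  ring

lemma integral_pi_sum_mul_sq_mul_sum_sq (g : ι → ℝ) :
    ∫ u : ι → ℝ, (∑ i, g i * u i) ^ 2 * ∑ k, u k ^ 2 ∂𝒩 =
      (Fintype.card ι + 2) * ∑ i, g i ^ 2 := by
  classical
  simp only [sum_mul_sq_mul_sum_sq_eq]
  rw [integral_sum_sum_sum fun i j k => (integrable_pi_monomial j k i 1 1 2).const_mul _]
  simp only [integral_const_mul, integral_pi_mul_mul_sq]
  simp [mul_ite, mul_add, Finset.sum_add_distrib, ← Finset.sum_mul, ← sq]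
  ring

end GaussianCoordinates

section StdGaussian

variable {d : ℕ}

lemma integral_stdGaussian (F : EuclideanSpace ℝ (Fin d) → ℝ) :
    ∫ u, F u ∂stdGaussian d =
      ∫ w, F (WithLp.toLp 2 w) ∂Measure.pi fun _ : Fin d => gaussianReal 0 1 :=
  integral_map_equiv _ _

lemma integrable_stdGaussian_iff (F : EuclideanSpace ℝ (Fin d) → ℝ) :
    Integrable F (stdGaussian d) ↔
      Integrable (fun w => F (WithLp.toLp 2 w)) (Measure.pi fun _ : Fin d => gaussianReal 0 1) :=
  integrable_map_equiv _ _

lemma norm_toLp_sq {ι : Type*} [Fintype ι] (w : ι → ℝ) :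
    ‖WithLp.toLp 2 w‖ ^ 2 = ∑ i, w i ^ 2 := by
  simp [EuclideanSpace.real_norm_sq_eq]

lemma inner_toLp {ι : Type*} [Fintype ι] (g : EuclideanSpace ℝ ι) (w : ι → ℝ) :
    ⟪g, WithLp.toLp 2 w⟫ = ∑ i, g i * w i := by
  simp [PiLp.inner_apply, mul_comm]

lemma integrable_norm_pow_six_stdGaussian :
    Integrable (fun u => ‖u‖ ^ 6) (stdGaussian d) := by
  rw [integrable_stdGaussian_iff]
  simpa [← norm_toLp_sq, ← pow_mul] using integrable_pi_sum_sq_pow_three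

lemma integral_norm_pow_six_stdGaussian :
    ∫ u, ‖u‖ ^ 6 ∂stdGaussian d = d * (d + 2) * (d + 4) := by
  rw [integral_stdGaussian]
  simpa [← norm_toLp_sq, ← pow_mul] using integral_pi_sum_sq_pow_three (ι := Fin d)

lemma integrable_inner_sq_mul_norm_sq_stdGaussian (g : EuclideanSpace ℝ (Fin d)) :
    Integrable (fun u => ⟪g, u⟫ ^ 2 * ‖u‖ ^ 2) (stdGaussian d) := by
  rw [integrable_stdGaussian_iff]
  simpa [← norm_toLp_sq, ← inner_toLp] using integrable_pi_sum_mul_sq_mul_sum_sq (fun i => g i)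

lemma integral_inner_sq_mul_norm_sq_stdGaussian (g : EuclideanSpace ℝ (Fin d)) :
    ∫ u, ⟪g, u⟫ ^ 2 * ‖u‖ ^ 2 ∂stdGaussian d = (d + 2) * ‖g‖ ^ 2 := by
  rw [integral_stdGaussian, EuclideanSpace.real_norm_sq_eq]
  simpa [← norm_toLp_sq, ← inner_toLp] using integral_pi_sum_mul_sq_mul_sum_sq (fun i => g i)

end StdGaussian

section Descent

variable {F : Type*} [NormedAddCommGroup F] [InnerProductSpace ℝ F] [CompleteSpace F]
  {f : F → ℝ} {L : ℝ} {x : F}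

lemma abs_sub_sub_inner_gradient_le (hf : Differentiable ℝ f)
    (hLip : ∀ y, ‖gradient f y - gradient f x‖ ≤ L * ‖y - x‖) (v : F) :
    |f (x + v) - f x - ⟪gradient f x, v⟫| ≤ L / 2 * ‖v‖ ^ 2 := by
  set φ : ℝ → ℝ := fun t => f (x + t • v) - f x - t * ⟪gradient f x, v⟫
  have hφ : ∀ t, HasDerivAt φ ⟪gradient f (x + t • v) - gradient f x, v⟫ t := by
    intro t
    have hline : HasDerivAt (fun t : ℝ => x + t • v) v t := by
      simpa using ((hasDerivAt_id t).smul_const v).const_add x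
    have hcomp := (hf (x + t • v)).hasFDerivAt.comp_hasDerivAt t hline
    rw [← inner_gradient_left] at hcomp
    simpa [φ, inner_sub_left] using (hcomp.sub_const (f x)).fun_sub (hasDerivAt_mul_const _)
  have hφ' : ∀ t ∈ Set.Ico (0 : ℝ) 1,
      ‖⟪gradient f (x + t • v) - gradient f x, v⟫‖ ≤ L * ‖v‖ ^ 2 * t := by
    rintro t ⟨ht, -⟩
    calc ‖⟪gradient f (x + t • v) - gradient f x, v⟫‖
        ≤ ‖gradient f (x + t • v) - gradient f x‖ * ‖v‖ := norm_inner_le_norm _ _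
      _ ≤ L * ‖t • v‖ * ‖v‖ := by
          gcongr
          simpa using hLip (x + t • v)
      _ = L * ‖v‖ ^ 2 * t := by rw [norm_smul, Real.norm_of_nonneg ht]; ring
  have hB : ∀ t, HasDerivAt (fun t => L / 2 * ‖v‖ ^ 2 * t ^ 2) (L * ‖v‖ ^ 2 * t) t := fun t =>
    ((hasDerivAt_pow 2 t).const_mul (L / 2 * ‖v‖ ^ 2)).congr_deriv (by push_cast; ring)
  simpa [φ] using image_norm_le_of_norm_deriv_right_le_deriv_boundary
    (fun t _ => (hφ t).continuousAt.continuousWithinAt) (fun t _ => (hφ t).hasDerivWithinAt)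
    (by simp [φ]) hB hφ' (Set.right_mem_Icc.2 zero_le_one)

lemma sq_sub_le_of_lipschitz_gradient (hf : Differentiable ℝ f)
    (hLip : ∀ y, ‖gradient f y - gradient f x‖ ≤ L * ‖y - x‖) (v : F) :
    (f (x + v) - f x) ^ 2 ≤ L ^ 2 / 2 * ‖v‖ ^ 4 + 2 * ⟪gradient f x, v⟫ ^ 2 := by
  obtain ⟨hlo, hhi⟩ := abs_le.1 (abs_sub_sub_inner_gradient_le hf hLip v)
  have hsq := sq_le_sq' hlo hhi
  nlinarith [sq_nonneg (f (x + v) - f x - 2 * ⟪gradient f x, v⟫)]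

lemma sq_sub_mul_norm_sq_le_of_lipschitz_gradient (hf : Differentiable ℝ f)
    (hLip : ∀ y, ‖gradient f y - gradient f x‖ ≤ L * ‖y - x‖) (ν : ℝ) (u : F) :
    (f (x + ν • u) - f x) ^ 2 * ‖u‖ ^ 2 ≤
      ν ^ 2 * (ν ^ 2 * L ^ 2 / 2 * ‖u‖ ^ 6 + 2 * (⟪gradient f x, u⟫ ^ 2 * ‖u‖ ^ 2)) := by
  have h := sq_sub_le_of_lipschitz_gradient hf hLip (ν • u)
  rw [norm_smul, real_inner_smul_right, Real.norm_eq_abs, mul_pow,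
    (by decide : Even 4).pow_abs] at h
  calc _ ≤ (L ^ 2 / 2 * (ν ^ 4 * ‖u‖ ^ 4) + 2 * (ν * ⟪gradient f x, u⟫) ^ 2) * ‖u‖ ^ 2 := by
        gcongr
    _ = _ := by ring

end Descent

theorem gaussian_difference_quotient_second_moment_le_general (d : ℕ) (L ν : ℝ)
    (hν : 0 < ν) (f : EuclideanSpace ℝ (Fin d) → ℝ) (hf : Differentiable ℝ f)
    (hLip : ∀ x y, ‖gradient f x - gradient f y‖ ≤ L * ‖x - y‖)
    (x : EuclideanSpace ℝ (Fin d)) :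
    1 / ν ^ 2 * ∫ u, (f (x + ν • u) - f x) ^ 2 * ‖u‖ ^ 2 ∂(stdGaussian d)
      ≤ ν ^ 2 / 2 * L ^ 2 * ((d : ℝ) + 6) ^ 3 + 2 * ((d : ℝ) + 4) * ‖gradient f x‖ ^ 2 := by
  set g := gradient f x
  have hint : Integrable (fun u => ν ^ 2 * L ^ 2 / 2 * ‖u‖ ^ 6 + 2 * (⟪g, u⟫ ^ 2 * ‖u‖ ^ 2))
      (stdGaussian d) :=
    (integrable_norm_pow_six_stdGaussian.const_mul _).add
      ((integrable_inner_sq_mul_norm_sq_stdGaussian g).const_mul _)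
  have hmono : ∫ u, (f (x + ν • u) - f x) ^ 2 * ‖u‖ ^ 2 ∂stdGaussian d ≤
      ν ^ 2 * ∫ u, ν ^ 2 * L ^ 2 / 2 * ‖u‖ ^ 6 + 2 * (⟪g, u⟫ ^ 2 * ‖u‖ ^ 2) ∂stdGaussian d := by
    rw [← integral_const_mul]
    exact integral_mono_of_nonneg (ae_of_all _ fun u => by positivity) (hint.const_mul _)
      (ae_of_all _ (sq_sub_mul_norm_sq_le_of_lipschitz_gradient hf (fun y => hLip y x) ν))
  rw [integral_add (integrable_norm_pow_six_stdGaussian.const_mul _)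
    ((integrable_inner_sq_mul_norm_sq_stdGaussian g).const_mul _), integral_const_mul,
    integral_const_mul, integral_norm_pow_six_stdGaussian,
    integral_inner_sq_mul_norm_sq_stdGaussian] at hmono
  calc _ ≤ 1 / ν ^ 2 * (ν ^ 2 * (ν ^ 2 * L ^ 2 / 2 * (d * (d + 2) * (d + 4))
          + 2 * ((d + 2) * ‖g‖ ^ 2))) := by gcongr
    _ = ν ^ 2 / 2 * L ^ 2 * (d * (d + 2) * (d + 4)) + 2 * ((d : ℝ) + 2) * ‖g‖ ^ 2 := by
          field_simp
    _ ≤ _ := by gcongr <;> nlinarith [(d.cast_nonneg : (0 : ℝ) ≤ d)]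

/-- If `f : ℝ^d → ℝ` is differentiable with `L`-Lipschitz gradient and
`ν > 0`, then for every `x`,
`(1/ν²) E_u[(f(x+νu) − f(x))² ‖u‖²] ≤ (ν²/2) L² (d+6)³ + 2(d+4) ‖∇f(x)‖²`. -/
theorem gaussian_difference_quotient_second_moment_le (d : ℕ) (L ν : ℝ) (hL : 0 < L)
    (hν : 0 < ν) (f : EuclideanSpace ℝ (Fin d) → ℝ) (hf : Differentiable ℝ f)
    (hLip : ∀ x y, ‖gradient f x - gradient f y‖ ≤ L * ‖x - y‖)
    (x : EuclideanSpace ℝ (Fin d)) :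
    1 / ν ^ 2 * ∫ u, (f (x + ν • u) - f x) ^ 2 * ‖u‖ ^ 2 ∂(stdGaussian d)
      ≤ ν ^ 2 / 2 * L ^ 2 * ((d : ℝ) + 6) ^ 3 + 2 * ((d : ℝ) + 4) * ‖gradient f x‖ ^ 2 :=
  gaussian_difference_quotient_second_moment_le_general d L ν hν f hf hLip x
end

section
/- Let n ≥ 2, η > 0, and let x_1, …, x_n ∈ ℝ^d and g_1, …, g_n ∈ ℝ^d. Set μ = (1/n)∑_{i=1}^n x_i, Γ = (1/n)∑_{i=1}^n ‖x_i − μ‖², and M = (1/n)∑_{i=1}^n ‖g_i‖². For each ordered pair (i, j) with i ≠ j, define the updated configuration x'(i,j) by x'_i = x'_j = (x_i + x_j)/2 − η(g_i + g_j)/2 and x'_k = x_k for k ∉ {i, j}; let μ'(i,j) be its mean and Γ'(i,j) = (1/n)∑_{k=1}^n ‖x'_k − μ'(i,j)‖². Then the average over all ordered pairs satisfies (1/(n(n−1))) ∑_{i ≠ j} Γ'(i,j) ≤ (1 − 1/(2n)) Γ + (4/n) η² M. -/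
/-!
The mean minimises the sum of squared distances, so `Γ'(i,j)` may be measured around the old
mean `μ` instead of `μ'(i,j)`. Around `μ`, with `uₖ = xₖ - μ` and `vₖ = uₖ - η gₖ`, the update
replaces `uᵢ, uⱼ` by two copies of `(vᵢ + vⱼ)/2`, and summing over ordered pairs turns the
potential into an explicit combination of `∑ ‖uₖ‖²`, `∑ ‖vₖ‖²` and `‖∑ vₖ‖² = η² ‖∑ gₖ‖²`
(as `∑ uₖ = 0`). Young's inequality `‖u - η g‖² ≤ 3/2 ‖u‖² + 3 η² ‖g‖²` and
`‖∑ gₖ‖² ≤ n ∑ ‖gₖ‖²` conclude.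
-/

open Finset

open scoped RealInnerProductSpace

namespace Finset

variable {ι E : Type*} [DecidableEq ι] [NormedAddCommGroup E] [InnerProductSpace ℝ E]

theorem sum_offDiag_eq_sum_sum_sub_sum_diag {M : Type*} [AddCommGroup M] (s : Finset ι)
    (f : ι → ι → M) :
    ∑ p ∈ s.offDiag, f p.1 p.2 = ∑ i ∈ s, ∑ j ∈ s, f i j - ∑ i ∈ s, f i i := by
  rw [eq_sub_iff_add_eq, add_comm, ← sum_diag s (fun p => f p.1 p.2),
    ← sum_union (disjoint_diag_offDiag s), diag_union_offDiag, sum_product]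

theorem sum_offDiag_add (s : Finset ι) (a : ι → ℝ) :
    ∑ p ∈ s.offDiag, (a p.1 + a p.2) = 2 * (#s - 1 : ℝ) * ∑ i ∈ s, a i := by
  rw [sum_offDiag_eq_sum_sum_sub_sum_diag s fun i j => a i + a j]
  simp only [sum_add_distrib, sum_const, nsmul_eq_mul, ← mul_sum]
  ring

theorem sum_offDiag_norm_add_sq (s : Finset ι) (v : ι → E) :
    ∑ p ∈ s.offDiag, ‖v p.1 + v p.2‖ ^ 2
      = 2 * (#s - 2 : ℝ) * ∑ i ∈ s, ‖v i‖ ^ 2 + 2 * ‖∑ i ∈ s, v i‖ ^ 2 := by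
  have h_inner : ∑ i ∈ s, ∑ j ∈ s, ⟪v i, v j⟫ = ‖∑ i ∈ s, v i‖ ^ 2 := by
    rw [← real_inner_self_eq_norm_sq, sum_inner]
    simp only [inner_sum]
  rw [sum_offDiag_eq_sum_sum_sub_sum_diag s fun i j => ‖v i + v j‖ ^ 2]
  simp only [norm_add_sq_real, sum_add_distrib, ← mul_sum, h_inner, sum_const, nsmul_eq_mul,
    real_inner_self_eq_norm_sq]
  ring

end Finset

theorem norm_sum_sq_le_card_mul {ι F : Type*} [SeminormedAddCommGroup F] (s : Finset ι)
    (v : ι → F) : ‖∑ i ∈ s, v i‖ ^ 2 ≤ #s * ∑ i ∈ s, ‖v i‖ ^ 2 :=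
  (pow_le_pow_left₀ (norm_nonneg _) (norm_sum_le s v) 2).trans (sq_sum_le_card_mul_sum_sq ..)

theorem norm_sub_sq_le {F : Type*} [SeminormedAddCommGroup F] {t : ℝ} (ht : 0 < t) (a b : F) :
    ‖a - b‖ ^ 2 ≤ (1 + t) * ‖a‖ ^ 2 + (1 + t⁻¹) * ‖b‖ ^ 2 := by
  have h_amgm : 2 * ‖a‖ * ‖b‖ ≤ t * ‖a‖ ^ 2 + t⁻¹ * ‖b‖ ^ 2 := by
    have := two_mul_le_add_sq (t * ‖a‖) ‖b‖
    field_simp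
    nlinarith
  nlinarith [norm_sub_le a b, norm_nonneg (a - b)]

theorem sum_norm_sub_smul_sq_le {ι F : Type*} [SeminormedAddCommGroup F] [NormedSpace ℝ F]
    (s : Finset ι) (u g : ι → F) (η : ℝ) :
    ∑ k ∈ s, ‖u k - η • g k‖ ^ 2
      ≤ 3 / 2 * ∑ k ∈ s, ‖u k‖ ^ 2 + 3 * η ^ 2 * ∑ k ∈ s, ‖g k‖ ^ 2 :=
  calc ∑ k ∈ s, ‖u k - η • g k‖ ^ 2
      ≤ ∑ k ∈ s, ((1 + 2⁻¹) * ‖u k‖ ^ 2 + (1 + 2⁻¹⁻¹) * ‖η • g k‖ ^ 2) :=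
        sum_le_sum fun k _ => norm_sub_sq_le (by norm_num) _ _
    _ = _ := by
        simp only [norm_smul, mul_pow, Real.norm_eq_abs, sq_abs, sum_add_distrib, ← mul_sum]
        ring

section average

variable {ι E : Type*} [Fintype ι]

theorem sum_sub_average_eq_zero [AddCommGroup E] [Module ℝ E] (y : ι → E) :
    ∑ k, (y k - (Fintype.card ι : ℝ)⁻¹ • ∑ l, y l) = 0 := by
  rcases isEmpty_or_nonempty ι with hι | hι
  · exact Fintype.sum_empty _
  rw [sum_sub_distrib, sum_const, card_univ, ← Nat.cast_smul_eq_nsmul ℝ, smul_smul,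
    mul_inv_cancel₀ (by positivity), one_smul, sub_self]

theorem sum_norm_sub_average_sq_le [NormedAddCommGroup E] [InnerProductSpace ℝ E] (y : ι → E)
    (c : E) :
    ∑ k, ‖y k - (Fintype.card ι : ℝ)⁻¹ • ∑ l, y l‖ ^ 2 ≤ ∑ k, ‖y k - c‖ ^ 2 := by
  set m := (Fintype.card ι : ℝ)⁻¹ • ∑ l, y l
  have h_cross : ∑ k, 2 * ⟪y k - m, m - c⟫ = 0 := by
    rw [← mul_sum, ← sum_inner, sum_sub_average_eq_zero, inner_zero_left, mul_zero]
  have h_split : ∀ k, y k - c = (y k - m) + (m - c) := fun k => by abel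
  simp only [h_split, norm_add_sq_real, sum_add_distrib, h_cross, add_zero, sum_const]
  exact le_add_of_nonneg_right (nsmul_nonneg (sq_nonneg _) _)

end average

section pairAverage

variable {ι E : Type*} [Fintype ι] [DecidableEq ι]

theorem Fintype.sum_ite_or_eq {M : Type*} [AddCommGroup M] {i j : ι} (hij : i ≠ j) (c : M)
    (y : ι → M) :
    ∑ k, (if k = i ∨ k = j then c else y k) = ∑ k, y k - y i - y j + 2 • c := by
  have h_pair : ({i, j} : Finset ι) = univ.filter fun k => k = i ∨ k = j := by ext; simp
  rw [sum_ite, ← h_pair, sum_const, card_pair hij, filter_not, ← h_pair,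
    sum_sdiff_eq_sub (subset_univ _), sum_pair hij]
  abel

variable [NormedAddCommGroup E] [InnerProductSpace ℝ E]

theorem sum_norm_sq_pair_average {i j : ι} (hij : i ≠ j) (u v : ι → E) :
    ∑ k, ‖if k = i ∨ k = j then (2 : ℝ)⁻¹ • (v i + v j) else u k‖ ^ 2
      = ∑ k, ‖u k‖ ^ 2 - ‖u i‖ ^ 2 - ‖u j‖ ^ 2 + ‖v i + v j‖ ^ 2 / 2 := by
  simp only [apply_ite (‖·‖ ^ 2)]
  rw [Fintype.sum_ite_or_eq hij, norm_smul, mul_pow, nsmul_eq_mul]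
  norm_num
  ring

theorem sum_offDiag_sum_norm_sq_pair_average (u v : ι → E) :
    ∑ p ∈ univ.offDiag,
        ∑ k, ‖if k = p.1 ∨ k = p.2 then (2 : ℝ)⁻¹ • (v p.1 + v p.2) else u k‖ ^ 2
      = (Fintype.card ι - 1) * (Fintype.card ι - 2) * ∑ k, ‖u k‖ ^ 2
        + (Fintype.card ι - 2) * ∑ k, ‖v k‖ ^ 2 + ‖∑ k, v k‖ ^ 2 := by
  rw [sum_congr rfl fun p hp => sum_norm_sq_pair_average (mem_offDiag.mp hp).2.2 u v]
  simp only [sum_add_distrib, sum_sub_distrib, ← sum_div, sum_offDiag_norm_add_sq,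
    sum_offDiag_eq_sum_sum_sub_sum_diag univ fun _ _ => ∑ k, ‖u k‖ ^ 2]
  rw [sub_sub _ (∑ p ∈ univ.offDiag, ‖u p.1‖ ^ 2), ← sum_add_distrib,
    sum_offDiag_add univ fun k => ‖u k‖ ^ 2]
  simp only [sum_const, card_univ, nsmul_eq_mul]
  ring

theorem sum_offDiag_sum_norm_sq_pair_step_le (hι : 2 ≤ Fintype.card ι) {u : ι → E}
    (hu : ∑ k, u k = 0) (g : ι → E) (η : ℝ) :
    ∑ p ∈ univ.offDiag, ∑ k, ‖if k = p.1 ∨ k = p.2 then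
        (2 : ℝ)⁻¹ • (u p.1 - η • g p.1 + (u p.2 - η • g p.2)) else u k‖ ^ 2
      ≤ (Fintype.card ι - 1) *
          ((Fintype.card ι - 2⁻¹) * ∑ k, ‖u k‖ ^ 2 + 4 * η ^ 2 * ∑ k, ‖g k‖ ^ 2) := by
  have h_n : (2 : ℝ) ≤ Fintype.card ι := by exact_mod_cast hι
  have h_sum : ‖∑ k, (u k - η • g k)‖ ^ 2 = η ^ 2 * ‖∑ k, g k‖ ^ 2 := by
    simp only [sum_sub_distrib, hu, ← smul_sum, zero_sub, norm_neg, norm_smul, mul_pow,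
      Real.norm_eq_abs, sq_abs]
  have h_W : ‖∑ k, g k‖ ^ 2 ≤ Fintype.card ι * ∑ k, ‖g k‖ ^ 2 := by
    simpa using norm_sum_sq_le_card_mul univ g
  have h_S := sum_nonneg fun k (_ : k ∈ univ) => sq_nonneg ‖u k‖
  have h_G := sum_nonneg fun k (_ : k ∈ univ) => sq_nonneg ‖g k‖
  rw [sum_offDiag_sum_norm_sq_pair_average u fun k => u k - η • g k, h_sum]
  nlinarith [mul_le_mul_of_nonneg_left (sum_norm_sub_smul_sq_le univ u g η)
      (by linarith : (0 : ℝ) ≤ Fintype.card ι - 2),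
    mul_le_mul_of_nonneg_left h_W (sq_nonneg η), mul_nonneg (sq_nonneg η) h_G]

end pairAverage

theorem hdo_potential_step_general (d n : ℕ) (hn : 2 ≤ n) (η : ℝ)
    (x g : Fin n → EuclideanSpace ℝ (Fin d)) :
    let μ : EuclideanSpace ℝ (Fin d) := (n : ℝ)⁻¹ • ∑ i, x i
    let Γ : ℝ := (n : ℝ)⁻¹ * ∑ i, ‖x i - μ‖ ^ 2
    let M : ℝ := (n : ℝ)⁻¹ * ∑ i, ‖g i‖ ^ 2
    let x' : Fin n → Fin n → Fin n → EuclideanSpace ℝ (Fin d) := fun i j k =>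
      if k = i ∨ k = j then (2 : ℝ)⁻¹ • (x i + x j) - (η / 2) • (g i + g j) else x k
    let μ' : Fin n → Fin n → EuclideanSpace ℝ (Fin d) := fun i j =>
      (n : ℝ)⁻¹ • ∑ k, x' i j k
    let Γ' : Fin n → Fin n → ℝ := fun i j => (n : ℝ)⁻¹ * ∑ k, ‖x' i j k - μ' i j‖ ^ 2
    ((n : ℝ) * ((n : ℝ) - 1))⁻¹ * ∑ p ∈ (univ : Finset (Fin n)).offDiag, Γ' p.1 p.2
      ≤ (1 - 1 / (2 * (n : ℝ))) * Γ + 4 / (n : ℝ) * η ^ 2 * M := by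
  intro μ Γ M x' μ' Γ'
  set u := fun k => x k - μ
  have h_dev : ∀ i j k, x' i j k - μ =
      if k = i ∨ k = j then (2 : ℝ)⁻¹ • (u i - η • g i + (u j - η • g j)) else u k := by
    intro i j k
    simp only [x', u]
    split_ifs <;> module
  have h_sum_u : ∑ k, u k = 0 := by
    have h := sum_sub_average_eq_zero x
    rwa [Fintype.card_fin] at h
  have h_n : (2 : ℝ) ≤ n := by exact_mod_cast hn
  have h_coeff : 0 ≤ ((n : ℝ) * (n - 1))⁻¹ := inv_nonneg.mpr (by nlinarith)
  calc ((n : ℝ) * (n - 1))⁻¹ * ∑ p ∈ univ.offDiag, Γ' p.1 p.2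
      ≤ ((n : ℝ) * (n - 1))⁻¹ *
          ∑ p ∈ univ.offDiag, (n : ℝ)⁻¹ * ∑ k, ‖x' p.1 p.2 k - μ‖ ^ 2 := by
        refine mul_le_mul_of_nonneg_left (sum_le_sum fun p _ => ?_) h_coeff
        exact mul_le_mul_of_nonneg_left
          (by simpa using sum_norm_sub_average_sq_le (x' p.1 p.2) μ) (by positivity)
    _ ≤ ((n : ℝ) * (n - 1))⁻¹ * ((n : ℝ)⁻¹ *
          ((n - 1) * ((n - 2⁻¹) * ∑ k, ‖u k‖ ^ 2 + 4 * η ^ 2 * ∑ k, ‖g k‖ ^ 2))) := by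
        rw [← mul_sum]
        simp only [h_dev]
        gcongr
        simpa using sum_offDiag_sum_norm_sq_pair_step_le (by simpa using hn) h_sum_u g η
    _ = (1 - 1 / (2 * (n : ℝ))) * Γ + 4 / (n : ℝ) * η ^ 2 * M := by
        have : (n : ℝ) - 1 ≠ 0 := by linarith
        simp only [Γ, M, u]
        field_simp

/-- Deterministic core of the potential-decrease step of the HDO
algorithm: averaging the post-step potential `Γ'(i,j)` over all ordered pairs of distinct
interacting nodes gives
`(1/(n(n−1))) ∑_{i≠j} Γ'(i,j) ≤ (1 − 1/(2n)) Γ + (4/n) η² M`. -/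
theorem hdo_potential_step (d n : ℕ) (hn : 2 ≤ n) (η : ℝ) (hη : 0 < η)
    (x g : Fin n → EuclideanSpace ℝ (Fin d)) :
    let μ : EuclideanSpace ℝ (Fin d) := (n : ℝ)⁻¹ • ∑ i, x i
    let Γ : ℝ := (n : ℝ)⁻¹ * ∑ i, ‖x i - μ‖ ^ 2
    let M : ℝ := (n : ℝ)⁻¹ * ∑ i, ‖g i‖ ^ 2
    let x' : Fin n → Fin n → Fin n → EuclideanSpace ℝ (Fin d) := fun i j k =>
      if k = i ∨ k = j then (2 : ℝ)⁻¹ • (x i + x j) - (η / 2) • (g i + g j) else x k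
    let μ' : Fin n → Fin n → EuclideanSpace ℝ (Fin d) := fun i j =>
      (n : ℝ)⁻¹ • ∑ k, x' i j k
    let Γ' : Fin n → Fin n → ℝ := fun i j => (n : ℝ)⁻¹ * ∑ k, ‖x' i j k - μ' i j‖ ^ 2
    ((n : ℝ) * ((n : ℝ) - 1))⁻¹ * ∑ p ∈ (univ : Finset (Fin n)).offDiag, Γ' p.1 p.2
      ≤ (1 - 1 / (2 * (n : ℝ))) * Γ + 4 / (n : ℝ) * η ^ 2 * M :=
  hdo_potential_step_general d n hn η x g
end

section
/- Let n = n₀ + n₁ with n₀, n₁ ≥ 1, and let N₀, N₁ be a partition of {1, …, n} with |N₀| = n₀ and |N₁| = n₁. Let f, f^1, …, f^n : ℝ^d → ℝ be differentiable, each with L-Lipschitz gradient, and suppose f attains its global minimum at x* ∈ ℝ^d. Assume the balanced-distribution bounds: for all x, (1/n₀)∑_{i ∈ N₀} ‖∇f^i(x) − ∇f(x)‖² ≤ ς₀² and (1/n₁)∑_{i ∈ N₁} ‖∇f^i(x) − ∇f(x)‖² ≤ ς₁². Then for any α₀ ≥ α₁ > 0 and any points x_1, …, x_n ∈ ℝ^d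 with mean μ = (1/n)∑_i x_i and Γ = (1/n)∑_i ‖x_i − μ‖², one has (α₀/n)∑_{i ∈ N₀} ‖∇f^i(x_i)‖² + (α₁/n)∑_{i ∈ N₁} ‖∇f^i(x_i)‖² ≤ 3L²α₀Γ + (3α₀n₀ς₀² + 3α₁n₁ς₁²)/n + 6(α₀ + α₁)L(f(μ) − f(x*)). -/
/-!
Split `∇fⁱ(xᵢ) = (∇fⁱ(xᵢ) - ∇fⁱ(μ)) + (∇fⁱ(μ) - ∇f(μ)) + ∇f(μ)` and use
`‖a + b + c‖² ≤ 3‖a‖² + 3‖b‖² + 3‖c‖²`. The first term is at most `L‖xᵢ - μ‖` by smoothness of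
`fⁱ`, the second is controlled on average over each group by `ς₀²`, `ς₁²`, and the third by
`‖∇f(μ)‖² ≤ 2L(f(μ) - f(x*))`, which is the descent lemma at the gradient step `μ - ∇f(μ)/L`
compared with the minimum. Weighting the groups by `α₀ ≥ α₁ ≥ 0` and using `n₀, n₁ ≤ n` gives
the bound.
-/

open Finset InnerProductSpace

theorem sum_le_card_mul_of_inv_card_mul_sum_le {ι : Type*} {s : Finset ι} {a : ι → ℝ} {c : ℝ}
    (h : (#s : ℝ)⁻¹ * ∑ i ∈ s, a i ≤ c) : ∑ i ∈ s, a i ≤ #s * c := by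
  rcases s.eq_empty_or_nonempty with rfl | hs
  · simp
  · exact (inv_mul_le_iff₀ (by exact_mod_cast hs.card_pos)).1 h

theorem sq_norm_add_add_le {E : Type*} [SeminormedAddCommGroup E] (a b c : E) :
    ‖a + b + c‖ ^ 2 ≤ 3 * ‖a‖ ^ 2 + 3 * ‖b‖ ^ 2 + 3 * ‖c‖ ^ 2 := by
  have := norm_add₃_le (a := a) (b := b) (c := c)
  nlinarith [norm_nonneg (a + b + c), sq_nonneg (‖a‖ - ‖b‖), sq_nonneg (‖a‖ - ‖c‖),
    sq_nonneg (‖b‖ - ‖c‖)]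

section Gradient

variable {F : Type*} [NormedAddCommGroup F] [InnerProductSpace ℝ F] [CompleteSpace F]
  {f : F → ℝ} {L : ℝ}

theorem le_add_inner_gradient_add_sq_of_gradient_lipschitz (hf : Differentiable ℝ f)
    (hLip : ∀ x y, ‖gradient f x - gradient f y‖ ≤ L * ‖x - y‖) (x y : F) :
    f y ≤ f x + ⟪gradient f x, y - x⟫_ℝ + L / 2 * ‖y - x‖ ^ 2 := by
  set v := y - x
  -- `φ` is antitone on `[0, ∞)`: the Lipschitz bound beats the linear-plus-quadratic correction.
  set φ : ℝ → ℝ := fun t ↦ f (x + t • v) - t * ⟪gradient f x, v⟫_ℝ - L / 2 * t ^ 2 * ‖v‖ ^ 2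
  have hφ' : ∀ t, HasDerivAt φ
      (⟪gradient f (x + t • v), v⟫_ℝ - ⟪gradient f x, v⟫_ℝ - L * t * ‖v‖ ^ 2) t := by
    intro t
    have hline : HasDerivAt (fun t : ℝ ↦ x + t • v) v t := by
      simpa using ((hasDerivAt_id t).smul_const v).const_add x
    have hfline := (hf (x + t • v)).hasGradientAt.hasFDerivAt.comp_hasDerivAt t hline
    rw [toDual_apply_apply] at hfline
    refine ((hfline.sub ((hasDerivAt_id t).mul_const ⟪gradient f x, v⟫_ℝ)).sub
      (((hasDerivAt_pow 2 t).const_mul (L / 2)).mul_const (‖v‖ ^ 2))).congr_deriv ?_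
    ring
  have hφ'_nonpos : ∀ t ∈ interior (Set.Ici (0 : ℝ)),
      ⟪gradient f (x + t • v), v⟫_ℝ - ⟪gradient f x, v⟫_ℝ - L * t * ‖v‖ ^ 2 ≤ 0 := by
    intro t ht
    rw [interior_Ici, Set.mem_Ioi] at ht
    rw [sub_nonpos]
    have hgrad := hLip (x + t • v) x
    rw [add_sub_cancel_left, norm_smul, Real.norm_of_nonneg ht.le] at hgrad
    calc ⟪gradient f (x + t • v), v⟫_ℝ - ⟪gradient f x, v⟫_ℝ
        = ⟪gradient f (x + t • v) - gradient f x, v⟫_ℝ := (inner_sub_left _ _ _).symm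
      _ ≤ ‖gradient f (x + t • v) - gradient f x‖ * ‖v‖ := real_inner_le_norm _ _
      _ ≤ L * (t * ‖v‖) * ‖v‖ := by gcongr
      _ = L * t * ‖v‖ ^ 2 := by ring
  have hanti : AntitoneOn φ (Set.Ici 0) :=
    antitoneOn_of_hasDerivWithinAt_nonpos (convex_Ici 0)
      (fun t _ ↦ (hφ' t).continuousAt.continuousWithinAt)
      (fun t _ ↦ (hφ' t).hasDerivWithinAt) hφ'_nonpos
  have h01 := hanti (Set.self_mem_Ici) (Set.mem_Ici.2 zero_le_one) zero_le_one
  simp only [φ, v, one_smul, zero_smul, add_zero, add_sub_cancel] at h01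
  linarith

theorem sq_norm_gradient_le_of_forall_le (hL : 0 < L) (hf : Differentiable ℝ f)
    (hLip : ∀ x y, ‖gradient f x - gradient f y‖ ≤ L * ‖x - y‖)
    {xstar : F} (hmin : ∀ y, f xstar ≤ f y) (x : F) :
    ‖gradient f x‖ ^ 2 ≤ 2 * L * (f x - f xstar) := by
  have hstep := le_add_inner_gradient_add_sq_of_gradient_lipschitz hf hLip x
    (x - L⁻¹ • gradient f x)
  rw [sub_sub_cancel_left, inner_neg_right, real_inner_smul_right, real_inner_self_eq_norm_sq,
    norm_neg, norm_smul, Real.norm_of_nonneg (inv_nonneg.2 hL.le)] at hstep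
  have hquad : L / 2 * (L⁻¹ * ‖gradient f x‖) ^ 2 = L⁻¹ * ‖gradient f x‖ ^ 2 / 2 := by
    field_simp
  have hdecrease : L⁻¹ * ‖gradient f x‖ ^ 2 ≤ 2 * (f x - f xstar) := by
    linarith [hmin (x - L⁻¹ • gradient f x)]
  linarith [(inv_mul_le_iff₀ hL).1 hdecrease]

theorem sum_sq_norm_gradient_le {ι : Type*} (s : Finset ι) {fi : ι → F → ℝ} {ς : ℝ}
    (hLipfi : ∀ i x y, ‖gradient (fi i) x - gradient (fi i) y‖ ≤ L * ‖x - y‖)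
    (y : F) (hς : (#s : ℝ)⁻¹ * ∑ i ∈ s, ‖gradient (fi i) y - gradient f y‖ ^ 2 ≤ ς ^ 2)
    (xs : ι → F) :
    ∑ i ∈ s, ‖gradient (fi i) (xs i)‖ ^ 2
      ≤ 3 * L ^ 2 * ∑ i ∈ s, ‖xs i - y‖ ^ 2 + 3 * #s * ς ^ 2 + 3 * #s * ‖gradient f y‖ ^ 2 := by
  have hpoint : ∀ i, ‖gradient (fi i) (xs i)‖ ^ 2 ≤ 3 * L ^ 2 * ‖xs i - y‖ ^ 2
      + 3 * ‖gradient (fi i) y - gradient f y‖ ^ 2 + 3 * ‖gradient f y‖ ^ 2 := by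
    intro i
    have hsplit := sq_norm_add_add_le (gradient (fi i) (xs i) - gradient (fi i) y)
      (gradient (fi i) y - gradient f y) (gradient f y)
    have hlip : ‖gradient (fi i) (xs i) - gradient (fi i) y‖ ^ 2 ≤ L ^ 2 * ‖xs i - y‖ ^ 2 := by
      rw [← mul_pow]; gcongr; exact hLipfi i (xs i) y
    rw [sub_add_sub_cancel, sub_add_cancel] at hsplit
    linarith
  have hdissim := sum_le_card_mul_of_inv_card_mul_sum_le hς
  calc ∑ i ∈ s, ‖gradient (fi i) (xs i)‖ ^ 2
      ≤ ∑ i ∈ s, (3 * L ^ 2 * ‖xs i - y‖ ^ 2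
          + 3 * ‖gradient (fi i) y - gradient f y‖ ^ 2 + 3 * ‖gradient f y‖ ^ 2) :=
        sum_le_sum fun i _ ↦ hpoint i
    _ = 3 * L ^ 2 * ∑ i ∈ s, ‖xs i - y‖ ^ 2
          + 3 * ∑ i ∈ s, ‖gradient (fi i) y - gradient f y‖ ^ 2
          + 3 * #s * ‖gradient f y‖ ^ 2 := by
        rw [sum_add_distrib, sum_add_distrib, ← mul_sum, ← mul_sum, sum_const, nsmul_eq_mul]
        ring
    _ ≤ _ := by linarith

end Gradient

theorem hdo_weighted_gradient_bound_convex_general (d n₀ n₁ : ℕ)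
    (N₀ : Finset (Fin (n₀ + n₁))) (hcard : N₀.card = n₀)
    (L ς₀ ς₁ α₀ α₁ : ℝ) (hL : 0 < L) (hα₁ : 0 < α₁) (hα : α₁ ≤ α₀)
    (f : EuclideanSpace ℝ (Fin d) → ℝ)
    (fi : Fin (n₀ + n₁) → EuclideanSpace ℝ (Fin d) → ℝ)
    (hf : Differentiable ℝ f)
    (hLipf : ∀ x y, ‖gradient f x - gradient f y‖ ≤ L * ‖x - y‖)
    (hLipfi : ∀ i x y, ‖gradient (fi i) x - gradient (fi i) y‖ ≤ L * ‖x - y‖)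
    (xstar : EuclideanSpace ℝ (Fin d)) (hmin : ∀ y, f xstar ≤ f y)
    (hς₀ : ∀ x, (n₀ : ℝ)⁻¹ * ∑ i ∈ N₀, ‖gradient (fi i) x - gradient f x‖ ^ 2 ≤ ς₀ ^ 2)
    (hς₁ : ∀ x, (n₁ : ℝ)⁻¹ * ∑ i ∈ N₀ᶜ, ‖gradient (fi i) x - gradient f x‖ ^ 2 ≤ ς₁ ^ 2)
    (xs : Fin (n₀ + n₁) → EuclideanSpace ℝ (Fin d)) :
    let n : ℕ := n₀ + n₁
    let μ : EuclideanSpace ℝ (Fin d) := (n : ℝ)⁻¹ • ∑ i, xs i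
    let Γ : ℝ := (n : ℝ)⁻¹ * ∑ i, ‖xs i - μ‖ ^ 2
    α₀ / (n : ℝ) * ∑ i ∈ N₀, ‖gradient (fi i) (xs i)‖ ^ 2
        + α₁ / (n : ℝ) * ∑ i ∈ N₀ᶜ, ‖gradient (fi i) (xs i)‖ ^ 2
      ≤ 3 * L ^ 2 * α₀ * Γ + (3 * α₀ * n₀ * ς₀ ^ 2 + 3 * α₁ * n₁ * ς₁ ^ 2) / (n : ℝ)
        + 6 * (α₀ + α₁) * L * (f μ - f xstar) := by
  intro n μ Γ
  have hcard' : #N₀ᶜ = n₁ := by rw [card_compl, hcard, Fintype.card_fin, Nat.add_sub_cancel_left]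
  have h₀ := sum_sq_norm_gradient_le N₀ hLipfi μ (by rw [hcard]; exact hς₀ μ) xs
  have h₁ := sum_sq_norm_gradient_le N₀ᶜ hLipfi μ (by rw [hcard']; exact hς₁ μ) xs
  rw [hcard] at h₀
  rw [hcard'] at h₁
  have hG := sq_norm_gradient_le_of_forall_le hL hf hLipf hmin μ
  have hΓ : Γ = (n : ℝ)⁻¹ * (∑ i ∈ N₀, ‖xs i - μ‖ ^ 2 + ∑ i ∈ N₀ᶜ, ‖xs i - μ‖ ^ 2) := by
    rw [sum_add_sum_compl]
  set S₀ := ∑ i ∈ N₀, ‖xs i - μ‖ ^ 2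
  set S₁ := ∑ i ∈ N₀ᶜ, ‖xs i - μ‖ ^ 2
  set G := ‖gradient f μ‖ ^ 2
  have hα₀ : 0 ≤ α₀ := hα₁.le.trans hα
  have hweights : α₀ * (n₀ / n) + α₁ * (n₁ / n) ≤ α₀ + α₁ :=
    add_le_add (mul_le_of_le_one_right hα₀ (div_le_one_of_le₀ (by simp [n]) n.cast_nonneg))
      (mul_le_of_le_one_right hα₁.le (div_le_one_of_le₀ (by simp [n]) n.cast_nonneg))
  have hspread : α₀ * S₀ + α₁ * S₁ ≤ α₀ * (S₀ + S₁) := by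
    rw [mul_add]
    gcongr
  calc α₀ / n * ∑ i ∈ N₀, ‖gradient (fi i) (xs i)‖ ^ 2
        + α₁ / n * ∑ i ∈ N₀ᶜ, ‖gradient (fi i) (xs i)‖ ^ 2
      ≤ α₀ / n * (3 * L ^ 2 * S₀ + 3 * n₀ * ς₀ ^ 2 + 3 * n₀ * G)
        + α₁ / n * (3 * L ^ 2 * S₁ + 3 * n₁ * ς₁ ^ 2 + 3 * n₁ * G) := by gcongr
    _ = (n : ℝ)⁻¹ * (3 * L ^ 2 * (α₀ * S₀ + α₁ * S₁))
          + (3 * α₀ * n₀ * ς₀ ^ 2 + 3 * α₁ * n₁ * ς₁ ^ 2) / n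
          + 3 * (α₀ * (n₀ / n) + α₁ * (n₁ / n)) * G := by ring
    _ ≤ (n : ℝ)⁻¹ * (3 * L ^ 2 * (α₀ * (S₀ + S₁)))
          + (3 * α₀ * n₀ * ς₀ ^ 2 + 3 * α₁ * n₁ * ς₁ ^ 2) / n
          + 3 * (α₀ + α₁) * (2 * L * (f μ - f xstar)) := by gcongr
    _ = _ := by rw [hΓ]; ring

/-- Weighted bound on the average squared gradient norms of the local
objectives at the local models (convex case, Lemma `M^f`): with `μ` the mean of the local
models and `Γ` their variance potential,
`(α₀/n)∑_{i∈N₀}‖∇f^i(x_i)‖² + (α₁/n)∑_{i∈N₁}‖∇f^i(x_i)‖²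
  ≤ 3L²α₀Γ + (3α₀n₀ς₀² + 3α₁n₁ς₁²)/n + 6(α₀+α₁)L(f(μ) − f(x*))`. -/
theorem hdo_weighted_gradient_bound_convex (d n₀ n₁ : ℕ) (hn₀ : 1 ≤ n₀) (hn₁ : 1 ≤ n₁)
    (N₀ : Finset (Fin (n₀ + n₁))) (hcard : N₀.card = n₀)
    (L ς₀ ς₁ α₀ α₁ : ℝ) (hL : 0 < L) (hα₁ : 0 < α₁) (hα : α₁ ≤ α₀)
    (f : EuclideanSpace ℝ (Fin d) → ℝ)
    (fi : Fin (n₀ + n₁) → EuclideanSpace ℝ (Fin d) → ℝ)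
    (hf : Differentiable ℝ f) (hfi : ∀ i, Differentiable ℝ (fi i))
    (hLipf : ∀ x y, ‖gradient f x - gradient f y‖ ≤ L * ‖x - y‖)
    (hLipfi : ∀ i x y, ‖gradient (fi i) x - gradient (fi i) y‖ ≤ L * ‖x - y‖)
    (xstar : EuclideanSpace ℝ (Fin d)) (hmin : ∀ y, f xstar ≤ f y)
    (hς₀ : ∀ x, (n₀ : ℝ)⁻¹ * ∑ i ∈ N₀, ‖gradient (fi i) x - gradient f x‖ ^ 2 ≤ ς₀ ^ 2)
    (hς₁ : ∀ x, (n₁ : ℝ)⁻¹ * ∑ i ∈ N₀ᶜ, ‖gradient (fi i) x - gradient f x‖ ^ 2 ≤ ς₁ ^ 2)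
    (xs : Fin (n₀ + n₁) → EuclideanSpace ℝ (Fin d)) :
    let n : ℕ := n₀ + n₁
    let μ : EuclideanSpace ℝ (Fin d) := (n : ℝ)⁻¹ • ∑ i, xs i
    let Γ : ℝ := (n : ℝ)⁻¹ * ∑ i, ‖xs i - μ‖ ^ 2
    α₀ / (n : ℝ) * ∑ i ∈ N₀, ‖gradient (fi i) (xs i)‖ ^ 2
        + α₁ / (n : ℝ) * ∑ i ∈ N₀ᶜ, ‖gradient (fi i) (xs i)‖ ^ 2
      ≤ 3 * L ^ 2 * α₀ * Γ + (3 * α₀ * n₀ * ς₀ ^ 2 + 3 * α₁ * n₁ * ς₁ ^ 2) / (n : ℝ)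
        + 6 * (α₀ + α₁) * L * (f μ - f xstar) :=
  hdo_weighted_gradient_bound_convex_general d n₀ n₁ N₀ hcard L ς₀ ς₁ α₀ α₁ hL hα₁ hα f fi hf hLipf
    hLipfi xstar hmin hς₀ hς₁ xs
end

section
/- Let n = n₀ + n₁ with n₀, n₁ ≥ 1, and let N₀, N₁ be a partition of {1, …, n} with |N₀| = n₀ and |N₁| = n₁. Let f, f^1, …, f^n : ℝ^d → ℝ be differentiable, each with L-Lipschitz gradient. Assume for all x: (1/n₀)∑_{i ∈ N₀} ‖∇f^i(x) − ∇f(x)‖² ≤ ς₀² and (1/n₁)∑_{i ∈ N₁} ‖∇f^i(x) − ∇f(x)‖² ≤ ς₁². Then for any α₀ ≥ α₁ > 0 and any points x_1, …, x_n ∈ ℝ^d with mean μ = (1/n)∑_i x_i and Γ = (1/n)∑_i ‖x_i − μ‖², one has (α₀/n)∑_{i ∈ N₀} ‖∇f^i(x_i)‖² + (α₁/n)∑_{i ∈ N₁} ‖∇f^i(x_i)‖² ≤ 3L²α₀Γ + (3α₀n₀ς₀² + 3α₁n₁ς₁²)/n + 3((α₀n₀ + α₁n₁)/n)‖∇f(μ)‖².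 -/
open Finset

private lemma hdo_aux (α₀ α₁ S0 S1 T0 T1 D0 D1 C2 n0 n1 L2 s0 s1 : ℝ)
    (hα₀ : 0 < α₀) (hα₁ : 0 < α₁) (hα : α₁ ≤ α₀) (hL2 : 0 ≤ L2) (hT1 : 0 ≤ T1)
    (hB0 : S0 ≤ 3 * L2 * T0 + 3 * D0 + n0 * (3 * C2))
    (hB1 : S1 ≤ 3 * L2 * T1 + 3 * D1 + n1 * (3 * C2))
    (hD0 : D0 ≤ n0 * s0) (hD1 : D1 ≤ n1 * s1) :
    α₀ * S0 + α₁ * S1 ≤ 3 * L2 * α₀ * (T0 + T1) + (3 * α₀ * n0 * s0 + 3 * α₁ * n1 * s1) +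
      3 * (α₀ * n0 + α₁ * n1) * C2 := by
  nlinarith [mul_le_mul_of_nonneg_left hB0 hα₀.le, mul_le_mul_of_nonneg_left hB1 hα₁.le,
    mul_le_mul_of_nonneg_left hD0 (by positivity : (0:ℝ) ≤ 3 * α₀),
    mul_le_mul_of_nonneg_left hD1 (by positivity : (0:ℝ) ≤ 3 * α₁),
    mul_le_mul_of_nonneg_right hα (by positivity : (0:ℝ) ≤ 3 * L2 * T1)]

/-- Weighted bound on the average squared gradient norms of the local
objectives at the local models (non-convex case):
`(α₀/n)∑_{i∈N₀}‖∇f^i(x_i)‖² + (α₁/n)∑_{i∈N₁}‖∇f^i(x_i)‖²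
  ≤ 3L²α₀Γ + (3α₀n₀ς₀² + 3α₁n₁ς₁²)/n + 3((α₀n₀ + α₁n₁)/n)‖∇f(μ)‖²`. -/
theorem hdo_weighted_gradient_bound_nonconvex (d n₀ n₁ : ℕ) (hn₀ : 1 ≤ n₀) (hn₁ : 1 ≤ n₁)
    (N₀ : Finset (Fin (n₀ + n₁))) (hcard : N₀.card = n₀)
    (L ς₀ ς₁ α₀ α₁ : ℝ) (hL : 0 < L) (hα₁ : 0 < α₁) (hα : α₁ ≤ α₀)
    (f : EuclideanSpace ℝ (Fin d) → ℝ)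
    (fi : Fin (n₀ + n₁) → EuclideanSpace ℝ (Fin d) → ℝ)
    (hf : Differentiable ℝ f) (hfi : ∀ i, Differentiable ℝ (fi i))
    (hLipf : ∀ x y, ‖gradient f x - gradient f y‖ ≤ L * ‖x - y‖)
    (hLipfi : ∀ i x y, ‖gradient (fi i) x - gradient (fi i) y‖ ≤ L * ‖x - y‖)
    (hς₀ : ∀ x, (n₀ : ℝ)⁻¹ * ∑ i ∈ N₀, ‖gradient (fi i) x - gradient f x‖ ^ 2 ≤ ς₀ ^ 2)
    (hς₁ : ∀ x, (n₁ : ℝ)⁻¹ * ∑ i ∈ N₀ᶜ, ‖gradient (fi i) x - gradient f x‖ ^ 2 ≤ ς₁ ^ 2)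
    (xs : Fin (n₀ + n₁) → EuclideanSpace ℝ (Fin d)) :
    let n : ℕ := n₀ + n₁
    let μ : EuclideanSpace ℝ (Fin d) := (n : ℝ)⁻¹ • ∑ i, xs i
    let Γ : ℝ := (n : ℝ)⁻¹ * ∑ i, ‖xs i - μ‖ ^ 2
    α₀ / (n : ℝ) * ∑ i ∈ N₀, ‖gradient (fi i) (xs i)‖ ^ 2
        + α₁ / (n : ℝ) * ∑ i ∈ N₀ᶜ, ‖gradient (fi i) (xs i)‖ ^ 2
      ≤ 3 * L ^ 2 * α₀ * Γ + (3 * α₀ * n₀ * ς₀ ^ 2 + 3 * α₁ * n₁ * ς₁ ^ 2) / (n : ℝ)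
        + 3 * ((α₀ * n₀ + α₁ * n₁) / (n : ℝ)) * ‖gradient f μ‖ ^ 2 := by
  intro n μ Γ
  have hn : (0 : ℝ) < (n : ℝ) := by
    have : 0 < n := by omega
    exact_mod_cast this
  have hn₀' : (0 : ℝ) < (n₀ : ℝ) := by exact_mod_cast hn₀
  have hn₁' : (0 : ℝ) < (n₁ : ℝ) := by exact_mod_cast hn₁
  set C : ℝ := ‖gradient f μ‖ with hC
  -- pointwise bound
  have key : ∀ i, ‖gradient (fi i) (xs i)‖ ^ 2 ≤
      3 * L ^ 2 * ‖xs i - μ‖ ^ 2 + 3 * ‖gradient (fi i) μ - gradient f μ‖ ^ 2 + 3 * C ^ 2 := by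
    intro i
    have hA : ‖gradient (fi i) (xs i) - gradient (fi i) μ‖ ≤ L * ‖xs i - μ‖ := hLipfi i _ _
    have htri : ‖gradient (fi i) (xs i)‖ ≤
        ‖gradient (fi i) (xs i) - gradient (fi i) μ‖ +
        ‖gradient (fi i) μ - gradient f μ‖ + C := by
      have : gradient (fi i) (xs i) =
          (gradient (fi i) (xs i) - gradient (fi i) μ) +
          (gradient (fi i) μ - gradient f μ) + gradient f μ := by abel
      calc ‖gradient (fi i) (xs i)‖ = ‖(gradient (fi i) (xs i) - gradient (fi i) μ) +
          (gradient (fi i) μ - gradient f μ) + gradient f μ‖ := by rw [← this]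
        _ ≤ _ := by
            exact le_trans (norm_add_le _ _) (by gcongr; exact norm_add_le _ _)
    have h0 : (0:ℝ) ≤ ‖gradient (fi i) (xs i)‖ := norm_nonneg _
    have h1 : (0:ℝ) ≤ ‖gradient (fi i) (xs i) - gradient (fi i) μ‖ := norm_nonneg _
    have h2 : (0:ℝ) ≤ ‖gradient (fi i) μ - gradient f μ‖ := norm_nonneg _
    have h3 : (0:ℝ) ≤ C := norm_nonneg _
    have h4 : (0:ℝ) ≤ ‖xs i - μ‖ := norm_nonneg _
    nlinarith [sq_nonneg (‖gradient (fi i) (xs i) - gradient (fi i) μ‖ -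
        ‖gradient (fi i) μ - gradient f μ‖),
      sq_nonneg (‖gradient (fi i) (xs i) - gradient (fi i) μ‖ - C),
      sq_nonneg (‖gradient (fi i) μ - gradient f μ‖ - C),
      mul_le_mul htri htri h0 (by positivity : (0:ℝ) ≤ _),
      mul_le_mul hA hA h1 (by positivity : (0:ℝ) ≤ L * ‖xs i - μ‖)]
  set T0 : ℝ := ∑ i ∈ N₀, ‖xs i - μ‖ ^ 2 with hT0
  set T1 : ℝ := ∑ i ∈ N₀ᶜ, ‖xs i - μ‖ ^ 2 with hT1
  set D0 : ℝ := ∑ i ∈ N₀, ‖gradient (fi i) μ - gradient f μ‖ ^ 2 with hD0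
  set D1 : ℝ := ∑ i ∈ N₀ᶜ, ‖gradient (fi i) μ - gradient f μ‖ ^ 2 with hD1
  have hcard1 : N₀ᶜ.card = n₁ := by
    have := Finset.card_compl N₀
    simp [hcard, Fintype.card_fin] at this
    omega
  have hB0 : ∑ i ∈ N₀, ‖gradient (fi i) (xs i)‖ ^ 2 ≤
      3 * L ^ 2 * T0 + 3 * D0 + (n₀ : ℝ) * (3 * C ^ 2) := by
    calc ∑ i ∈ N₀, ‖gradient (fi i) (xs i)‖ ^ 2
        ≤ ∑ i ∈ N₀, (3 * L ^ 2 * ‖xs i - μ‖ ^ 2 +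
            3 * ‖gradient (fi i) μ - gradient f μ‖ ^ 2 + 3 * C ^ 2) :=
          Finset.sum_le_sum fun i _ => key i
      _ = 3 * L ^ 2 * T0 + 3 * D0 + (n₀ : ℝ) * (3 * C ^ 2) := by
          simp [Finset.sum_add_distrib, Finset.mul_sum, hcard, hT0, hD0]
  have hB1 : ∑ i ∈ N₀ᶜ, ‖gradient (fi i) (xs i)‖ ^ 2 ≤
      3 * L ^ 2 * T1 + 3 * D1 + (n₁ : ℝ) * (3 * C ^ 2) := by
    calc ∑ i ∈ N₀ᶜ, ‖gradient (fi i) (xs i)‖ ^ 2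
        ≤ ∑ i ∈ N₀ᶜ, (3 * L ^ 2 * ‖xs i - μ‖ ^ 2 +
            3 * ‖gradient (fi i) μ - gradient f μ‖ ^ 2 + 3 * C ^ 2) :=
          Finset.sum_le_sum fun i _ => key i
      _ = 3 * L ^ 2 * T1 + 3 * D1 + (n₁ : ℝ) * (3 * C ^ 2) := by
          simp [Finset.sum_add_distrib, Finset.mul_sum, hcard1, hT1, hD1]
  have hD0b : D0 ≤ (n₀ : ℝ) * ς₀ ^ 2 := by
    have := hς₀ μ
    rw [inv_mul_le_iff₀ hn₀'] at this
    linarith [this]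
  have hD1b : D1 ≤ (n₁ : ℝ) * ς₁ ^ 2 := by
    have := hς₁ μ
    rw [inv_mul_le_iff₀ hn₁'] at this
    linarith [this]
  have hΓsum : T0 + T1 = ∑ i, ‖xs i - μ‖ ^ 2 :=
    Finset.sum_add_sum_compl N₀ _
  have hΓ : Γ = (n : ℝ)⁻¹ * (T0 + T1) := by rw [hΓsum]
  have hT0n : 0 ≤ T0 := Finset.sum_nonneg fun i _ => sq_nonneg _
  have hT1n : 0 ≤ T1 := Finset.sum_nonneg fun i _ => sq_nonneg _
  have hC2 : 0 ≤ C ^ 2 := sq_nonneg _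
  have hα₀ : 0 < α₀ := lt_of_lt_of_le hα₁ hα
  have hL2 : 0 < L ^ 2 := by positivity
  have hS0n : (0:ℝ) ≤ ∑ i ∈ N₀, ‖gradient (fi i) (xs i)‖ ^ 2 :=
    Finset.sum_nonneg fun i _ => sq_nonneg _
  have hS1n : (0:ℝ) ≤ ∑ i ∈ N₀ᶜ, ‖gradient (fi i) (xs i)‖ ^ 2 :=
    Finset.sum_nonneg fun i _ => sq_nonneg _
  rw [hΓ]
  have final : α₀ * ∑ i ∈ N₀, ‖gradient (fi i) (xs i)‖ ^ 2
      + α₁ * ∑ i ∈ N₀ᶜ, ‖gradient (fi i) (xs i)‖ ^ 2 ≤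
      3 * L ^ 2 * α₀ * (T0 + T1) + (3 * α₀ * n₀ * ς₀ ^ 2 + 3 * α₁ * n₁ * ς₁ ^ 2) +
      3 * (α₀ * n₀ + α₁ * n₁) * C ^ 2 := by
    exact hdo_aux _ _ _ _ _ _ _ _ _ _ _ _ _ _ hα₀ hα₁ hα hL2.le hT1n hB0 hB1 hD0b hD1b
  have lhs_eq : α₀ / (n : ℝ) * ∑ i ∈ N₀, ‖gradient (fi i) (xs i)‖ ^ 2
      + α₁ / (n : ℝ) * ∑ i ∈ N₀ᶜ, ‖gradient (fi i) (xs i)‖ ^ 2 =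
      (α₀ * ∑ i ∈ N₀, ‖gradient (fi i) (xs i)‖ ^ 2
        + α₁ * ∑ i ∈ N₀ᶜ, ‖gradient (fi i) (xs i)‖ ^ 2) / (n : ℝ) := by ring
  have rhs_eq : 3 * L ^ 2 * α₀ * ((n : ℝ)⁻¹ * (T0 + T1)) +
      (3 * α₀ * n₀ * ς₀ ^ 2 + 3 * α₁ * n₁ * ς₁ ^ 2) / (n : ℝ) +
      3 * ((α₀ * n₀ + α₁ * n₁) / (n : ℝ)) * C ^ 2 =
      (3 * L ^ 2 * α₀ * (T0 + T1) + (3 * α₀ * n₀ * ς₀ ^ 2 + 3 * α₁ * n₁ * ς₁ ^ 2) +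
      3 * (α₀ * n₀ + α₁ * n₁) * C ^ 2) / (n : ℝ) := by
    field_simp
  rw [lhs_eq, rhs_eq]
  exact div_le_div_of_nonneg_right final hn.le
end

section
/- Let n ≥ 1, η > 0, and let f, f^1, …, f^n : ℝ^d → ℝ be differentiable with each ∇f^i L-Lipschitz and with ∇f(x) = (1/n)∑_{i=1}^n ∇f^i(x) for all x. Let x_1, …, x_n ∈ ℝ^d with mean μ = (1/n)∑_i x_i and Γ = (1/n)∑_i ‖x_i − μ‖². Let m_1, …, m_n ∈ ℝ^d be vectors satisfying ‖∇f^i(x_i) − m_i‖ ≤ b_i for nonnegative reals b_i, and set B = (1/n)∑_i b_i. Then ⟨∇f(μ), −(2η/n²) ∑_{i=1}^n m_i⟩ ≤ −(η/n)‖∇f(μ)‖² + (2η/n)B² + (2L²η/n)Γ. -/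
open Finset RealInnerProductSpace

/-!
Write `G = ∇f(μ)` and `e = (1/n) ∑ᵢ (mᵢ - ∇fⁱ(μ))`, so that the mean of the `mᵢ` is `G + e`.
Then `-2⟪G, G + e⟫ ≤ ‖e‖² - ‖G‖²`, and `‖e‖ ≤ B + L·(1/n)∑ᵢ ‖xᵢ - μ‖` by the bias bound and the
Lipschitz continuity of each `∇fⁱ` between `xᵢ` and `μ`. Squaring with `(a + b)² ≤ 2(a² + b²)`
and Jensen's inequality for the mean distance to `μ` turns this into `2B² + 2L²Γ`.
-/

lemma neg_two_mul_inner_self_add_le {E : Type*} [NormedAddCommGroup E] [InnerProductSpace ℝ E]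
    (u e : E) : -(2 * ⟪u, u + e⟫) ≤ ‖e‖ ^ 2 - ‖u‖ ^ 2 := by
  have h := norm_add_sq_real u e
  rw [inner_add_right, real_inner_self_eq_norm_sq]
  linarith [sq_nonneg ‖u + e‖]

lemma norm_sub_apply_le_add_mul {E F : Type*} [SeminormedAddCommGroup E]
    [SeminormedAddCommGroup F] {g : E → F} {L b : ℝ} {x y : E} {v : F}
    (hg : ‖g x - g y‖ ≤ L * ‖x - y‖) (hv : ‖g x - v‖ ≤ b) :
    ‖v - g y‖ ≤ b + L * ‖x - y‖ :=
  calc ‖v - g y‖ ≤ ‖v - g x‖ + ‖g x - g y‖ := norm_sub_le_norm_sub_add_norm_sub _ _ _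
    _ ≤ b + L * ‖x - y‖ := by rw [norm_sub_rev]; gcongr

lemma norm_inv_card_smul_sum_le {E : Type*} [SeminormedAddCommGroup E] [NormedSpace ℝ E]
    {n : ℕ} (v : Fin n → E) : ‖(n : ℝ)⁻¹ • ∑ i, v i‖ ≤ (n : ℝ)⁻¹ * ∑ i, ‖v i‖ := by
  rw [norm_smul, Real.norm_of_nonneg (by positivity)]
  gcongr
  exact norm_sum_le _ _

lemma sq_inv_card_mul_sum_le {n : ℕ} (a : Fin n → ℝ) :
    ((n : ℝ)⁻¹ * ∑ i, a i) ^ 2 ≤ (n : ℝ)⁻¹ * ∑ i, a i ^ 2 := by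
  simpa [inv_mul_eq_div] using
    sum_div_card_sq_le_sum_sq_div_card (s := (univ : Finset (Fin n))) (f := a)

theorem hdo_descent_inner_product_le_general (d n : ℕ) (η L : ℝ)
    (hη : 0 < η)
    (f : EuclideanSpace ℝ (Fin d) → ℝ) (fi : Fin n → EuclideanSpace ℝ (Fin d) → ℝ)
    (hLipfi : ∀ i x y, ‖gradient (fi i) x - gradient (fi i) y‖ ≤ L * ‖x - y‖)
    (hgrad : ∀ x, gradient f x = (n : ℝ)⁻¹ • ∑ i, gradient (fi i) x)
    (xs m : Fin n → EuclideanSpace ℝ (Fin d)) (b : Fin n → ℝ)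
    (hbias : ∀ i, ‖gradient (fi i) (xs i) - m i‖ ≤ b i) :
    let μ : EuclideanSpace ℝ (Fin d) := (n : ℝ)⁻¹ • ∑ i, xs i
    let Γ : ℝ := (n : ℝ)⁻¹ * ∑ i, ‖xs i - μ‖ ^ 2
    let B : ℝ := (n : ℝ)⁻¹ * ∑ i, b i
    ⟪gradient f μ, -((2 * η / (n : ℝ) ^ 2) • ∑ i, m i)⟫
      ≤ -(η / (n : ℝ)) * ‖gradient f μ‖ ^ 2 + 2 * η / (n : ℝ) * B ^ 2
        + 2 * L ^ 2 * η / (n : ℝ) * Γ := by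
  intro μ Γ B
  set G := gradient f μ
  set e := (n : ℝ)⁻¹ • ∑ i, (m i - gradient (fi i) μ)
  set A := (n : ℝ)⁻¹ * ∑ i, ‖xs i - μ‖
  have hmean : (2 * η / (n : ℝ) ^ 2) • ∑ i, m i = (2 * η / n) • (G + e) := by
    rw [show G + e = (n : ℝ)⁻¹ • ∑ i, m i by simp only [G, e, hgrad, sum_sub_distrib,
      smul_sub, add_sub_cancel], smul_smul]
    congr 1; ring
  have he : ‖e‖ ≤ B + L * A :=
    calc ‖e‖ ≤ (n : ℝ)⁻¹ * ∑ i, (b i + L * ‖xs i - μ‖) := by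
          refine (norm_inv_card_smul_sum_le _).trans ?_
          gcongr with i
          exact norm_sub_apply_le_add_mul (hLipfi i _ _) (hbias i)
      _ = B + L * A := by rw [sum_add_distrib, ← mul_sum]; ring
  have he_sq : ‖e‖ ^ 2 ≤ 2 * B ^ 2 + 2 * L ^ 2 * Γ :=
    calc ‖e‖ ^ 2 ≤ (B + L * A) ^ 2 := pow_le_pow_left₀ (norm_nonneg e) he 2
      _ ≤ 2 * (B ^ 2 + L ^ 2 * A ^ 2) := by rw [← mul_pow]; exact add_sq_le
      _ ≤ 2 * B ^ 2 + 2 * L ^ 2 * Γ := by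
          have hA : A ^ 2 ≤ Γ := sq_inv_card_mul_sum_le _
          linarith [mul_le_mul_of_nonneg_left hA (sq_nonneg L)]
  calc ⟪G, -((2 * η / (n : ℝ) ^ 2) • ∑ i, m i)⟫ = η / n * -(2 * ⟪G, G + e⟫) := by
        rw [hmean, inner_neg_right, inner_smul_right]; ring
    _ ≤ η / n * (2 * B ^ 2 + 2 * L ^ 2 * Γ - ‖G‖ ^ 2) := by
        gcongr
        linarith [neg_two_mul_inner_self_add_le G e]
    _ = _ := by ring

/-- Upper bound on the inner product of the global gradient at the mean
with the expected one-step displacement of the average model (possibly biased estimators):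
`⟨∇f(μ), −(2η/n²) ∑_i m_i⟩ ≤ −(η/n)‖∇f(μ)‖² + (2η/n)B² + (2L²η/n)Γ`. -/
theorem hdo_descent_inner_product_le (d n : ℕ) (hn : 1 ≤ n) (η L : ℝ)
    (hη : 0 < η) (hL : 0 < L)
    (f : EuclideanSpace ℝ (Fin d) → ℝ) (fi : Fin n → EuclideanSpace ℝ (Fin d) → ℝ)
    (hf : Differentiable ℝ f) (hfi : ∀ i, Differentiable ℝ (fi i))
    (hLipfi : ∀ i x y, ‖gradient (fi i) x - gradient (fi i) y‖ ≤ L * ‖x - y‖)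
    (hgrad : ∀ x, gradient f x = (n : ℝ)⁻¹ • ∑ i, gradient (fi i) x)
    (xs m : Fin n → EuclideanSpace ℝ (Fin d)) (b : Fin n → ℝ) (hb : ∀ i, 0 ≤ b i)
    (hbias : ∀ i, ‖gradient (fi i) (xs i) - m i‖ ≤ b i) :
    let μ : EuclideanSpace ℝ (Fin d) := (n : ℝ)⁻¹ • ∑ i, xs i
    let Γ : ℝ := (n : ℝ)⁻¹ * ∑ i, ‖xs i - μ‖ ^ 2
    let B : ℝ := (n : ℝ)⁻¹ * ∑ i, b i
    ⟪gradient f μ, -((2 * η / (n : ℝ) ^ 2) • ∑ i, m i)⟫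
      ≤ -(η / (n : ℝ)) * ‖gradient f μ‖ ^ 2 + 2 * η / (n : ℝ) * B ^ 2
        + 2 * L ^ 2 * η / (n : ℝ) * Γ :=
  hdo_descent_inner_product_le_general d n η L hη f fi hLipfi hgrad xs m b hbias
end

section
/- Let n ≥ 1, η > 0, ℓ > 0, L > 0 with ℓ ≤ L. Let f^1, …, f^n : ℝ^d → ℝ be differentiable, each ℓ-strongly convex (i.e. ⟨x − y, ∇f^i(x) − ∇f^i(y)⟩ ≥ ℓ‖x − y‖², equivalently f^i(x) ≥ f^i(y) + ⟨∇f^i(y), x − y⟩ + (ℓ/2)‖x − y‖²) and with L-Lipschitz gradient, and set f = (1/n)∑_i f^i, with x* the minimizer of f. Then for any points x_1, …, x_n ∈ ℝ^d with mean μ = (1/n)∑_i x_i and Γ = (1/n)∑_i ‖x_i − μ‖², one has ‖μ − x* − (2η/n²)∑_{i=1}^n ∇f^i(x_i)‖² ≤ (1 − ℓη/n)‖μ − x*‖² − (4η/n − 16Lη²/n²)(f(μ) − f(x*)) + (2(L+ℓ)η/n + 8L²η²/n²) Γ. -/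
/-!
Write `m` for the mean of the points `xᵢ`, `S = ∑ᵢ ∇fⁱ(xᵢ)` and `c = 2η/n²`, so that the left-hand
side is `‖m - x*‖² - 2c⟪S, m - x*⟫ + c²‖S‖²`. The cross term is bounded below by splitting
`⟪∇fⁱ(xᵢ), m - x*⟫` at `xᵢ`: the descent lemma controls the part towards `m`, strong convexity the
part towards `x*`. The quadratic term is bounded by comparing each `∇fⁱ(xᵢ)` with `∇fⁱ(m)`, and
`‖∇f(m)‖² ≤ 2L (f(m) - f(x*))`, which follows from the descent lemma by a gradient step from `m`.
-/

open Finset RealInnerProductSpace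

section Norms

variable {E ι : Type*} [SeminormedAddCommGroup E] [Fintype ι]

theorem norm_add_sq_le_two_mul (u w : E) : ‖u + w‖ ^ 2 ≤ 2 * (‖u‖ ^ 2 + ‖w‖ ^ 2) :=
  (pow_le_pow_left₀ (norm_nonneg _) (norm_add_le u w) 2).trans add_sq_le

theorem norm_sum_sq_le_card_mul_s14 (u : ι → E) :
    ‖∑ i, u i‖ ^ 2 ≤ Fintype.card ι * ∑ i, ‖u i‖ ^ 2 := by
  calc ‖∑ i, u i‖ ^ 2 ≤ (∑ i, ‖u i‖) ^ 2 :=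
        pow_le_pow_left₀ (norm_nonneg _) (norm_sum_le _ _) 2
    _ ≤ Fintype.card ι * ∑ i, ‖u i‖ ^ 2 := by
        simpa using sq_sum_le_card_mul_sum_sq (s := univ) (f := fun i => ‖u i‖)

end Norms

section InnerProduct

variable {F : Type*} [NormedAddCommGroup F] [InnerProductSpace ℝ F]

theorem norm_sq_le_of_forall_le_add_inner_add_sq {g : F → ℝ} {x z v : F} {L : ℝ} (hL : 0 < L)
    (hmin : ∀ y, g z ≤ g y) (hup : ∀ y, g y ≤ g x + ⟪v, y - x⟫ + L / 2 * ‖y - x‖ ^ 2) :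
    ‖v‖ ^ 2 ≤ 2 * L * (g x - g z) := by
  have hstep := (hmin _).trans (hup (x - L⁻¹ • v))
  rw [sub_sub_cancel_left, norm_neg, norm_smul, inner_neg_right, real_inner_smul_right,
    real_inner_self_eq_norm_sq, Real.norm_of_nonneg (inv_nonneg.2 hL.le)] at hstep
  have hgain : L / 2 * (L⁻¹ * ‖v‖) ^ 2 - L⁻¹ * ‖v‖ ^ 2 = -(‖v‖ ^ 2 / (2 * L)) := by
    field_simp; ring
  have : ‖v‖ ^ 2 / (2 * L) ≤ g x - g z := by linarith
  rwa [div_le_iff₀ (by positivity), mul_comm] at this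

variable [CompleteSpace F]

theorem le_add_inner_gradient_add_sq {g : F → ℝ} {L : ℝ} (hg : Differentiable ℝ g)
    (hLip : ∀ x y, ‖gradient g x - gradient g y‖ ≤ L * ‖x - y‖) (x y : F) :
    g y ≤ g x + ⟪gradient g x, y - x⟫ + L / 2 * ‖y - x‖ ^ 2 := by
  set v := y - x
  have hline (t : ℝ) :
      HasDerivAt (fun t : ℝ => g (x + t • v)) ⟪gradient g (x + t • v), v⟫ t := by
    have := (hasDerivAt_id t).smul_const v |>.const_add x
    simp only [id, one_smul] at this
    exact (hg _).hasGradientAt.hasFDerivAt.comp_hasDerivAt t this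
  have hquad (t : ℝ) :
      HasDerivAt (fun t : ℝ => g x + t * ⟪gradient g x, v⟫ + L / 2 * t ^ 2 * ‖v‖ ^ 2)
        (⟪gradient g x, v⟫ + L * t * ‖v‖ ^ 2) t := by
    refine (((hasDerivAt_mul_const _).const_add (g x)).add
      (((hasDerivAt_pow 2 t).const_mul (L / 2)).mul_const (‖v‖ ^ 2))).congr_deriv ?_
    push_cast
    ring
  have hslope {t : ℝ} (ht : 0 ≤ t) :
      ⟪gradient g (x + t • v), v⟫ ≤ ⟪gradient g x, v⟫ + L * t * ‖v‖ ^ 2 := by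
    have := calc ⟪gradient g (x + t • v) - gradient g x, v⟫
        ≤ ‖gradient g (x + t • v) - gradient g x‖ * ‖v‖ := real_inner_le_norm _ _
      _ ≤ L * ‖x + t • v - x‖ * ‖v‖ := by gcongr; exact hLip _ _
      _ = L * t * ‖v‖ ^ 2 := by
        rw [add_sub_cancel_left, norm_smul, Real.norm_of_nonneg ht]; ring
    rw [inner_sub_left] at this
    linarith
  have := image_le_of_deriv_right_le_deriv_boundary (a := 0) (b := 1)
    (fun t _ => (hline t).continuousAt.continuousWithinAt) (fun t _ => (hline t).hasDerivWithinAt)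
    (by simp) (fun t _ => (hquad t).continuousAt.continuousWithinAt)
    (fun t _ => (hquad t).hasDerivWithinAt) (fun t ht => hslope ht.1)
    (Set.right_mem_Icc.2 zero_le_one)
  simpa [v] using this

theorem le_inner_gradient_sub {g : F → ℝ} {ℓ L : ℝ} (hℓ : 0 ≤ ℓ) (hg : Differentiable ℝ g)
    (hsc : ∀ x y, g y + ⟪gradient g y, x - y⟫ + ℓ / 2 * ‖x - y‖ ^ 2 ≤ g x)
    (hLip : ∀ x y, ‖gradient g x - gradient g y‖ ≤ L * ‖x - y‖) (x m z : F) :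
    g m - g z + ℓ / 4 * ‖m - z‖ ^ 2 - (L + ℓ) / 2 * ‖x - m‖ ^ 2 ≤ ⟪gradient g x, m - z⟫ := by
  have hdesc := le_add_inner_gradient_add_sq hg hLip x m
  have hconv := hsc z x
  have hsplit : ‖m - z‖ ^ 2 ≤ 2 * (‖m - x‖ ^ 2 + ‖x - z‖ ^ 2) := by
    simpa only [sub_add_sub_cancel] using norm_add_sq_le_two_mul (m - x) (x - z)
  have hinner : ⟪gradient g x, m - z⟫ = ⟪gradient g x, m - x⟫ - ⟪gradient g x, z - x⟫ := by
    rw [← inner_sub_right, sub_sub_sub_cancel_right]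
  rw [norm_sub_rev z x] at hconv
  rw [norm_sub_rev x m, hinner]
  linarith [mul_le_mul_of_nonneg_left hsplit hℓ]

section Family

variable {ι : Type*} [Fintype ι] {f : ι → F → ℝ} {ℓ L : ℝ}

theorem sum_sub_add_le_inner_sum_gradient (hℓ : 0 ≤ ℓ) (hf : ∀ i, Differentiable ℝ (f i))
    (hsc : ∀ i x y, f i y + ⟪gradient (f i) y, x - y⟫ + ℓ / 2 * ‖x - y‖ ^ 2 ≤ f i x)
    (hLip : ∀ i x y, ‖gradient (f i) x - gradient (f i) y‖ ≤ L * ‖x - y‖) (xs : ι → F) (m z : F) :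
    ∑ i, (f i m - f i z) + Fintype.card ι * (ℓ / 4) * ‖m - z‖ ^ 2
      - (L + ℓ) / 2 * ∑ i, ‖xs i - m‖ ^ 2 ≤ ⟪∑ i, gradient (f i) (xs i), m - z⟫ := by
  calc _ = ∑ i, (f i m - f i z + ℓ / 4 * ‖m - z‖ ^ 2 - (L + ℓ) / 2 * ‖xs i - m‖ ^ 2) := by
        simp only [sum_sub_distrib, sum_add_distrib, sum_const, card_univ, nsmul_eq_mul, mul_sum]
        ring
    _ ≤ ∑ i, ⟪gradient (f i) (xs i), m - z⟫ :=
        sum_le_sum fun i _ => le_inner_gradient_sub hℓ (hf i) (hsc i) (hLip i) (xs i) m z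
    _ = _ := (sum_inner _ _ _).symm

theorem norm_sum_gradient_sq_le [Nonempty ι] (hL : 0 < L) (hf : ∀ i, Differentiable ℝ (f i))
    (hLip : ∀ i x y, ‖gradient (f i) x - gradient (f i) y‖ ≤ L * ‖x - y‖) {z : F}
    (hmin : ∀ y, ∑ i, f i z ≤ ∑ i, f i y) (xs : ι → F) (m : F) :
    ‖∑ i, gradient (f i) (xs i)‖ ^ 2 ≤ 2 * Fintype.card ι * L ^ 2 * ∑ i, ‖xs i - m‖ ^ 2
      + 4 * Fintype.card ι * L * ∑ i, (f i m - f i z) := by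
  set N : ℝ := (Fintype.card ι : ℝ)
  have hN : 0 < N := Nat.cast_pos.2 Fintype.card_pos
  have hdrift : ‖∑ i, (gradient (f i) (xs i) - gradient (f i) m)‖ ^ 2
      ≤ N * L ^ 2 * ∑ i, ‖xs i - m‖ ^ 2 := by
    calc _ ≤ N * ∑ i, ‖gradient (f i) (xs i) - gradient (f i) m‖ ^ 2 := norm_sum_sq_le_card_mul_s14 _
      _ ≤ N * ∑ i, (L * ‖xs i - m‖) ^ 2 := by gcongr with i; exact hLip i _ _
      _ = _ := by simp only [mul_pow, ← mul_sum]; ring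
  have hat_m : ‖∑ i, gradient (f i) m‖ ^ 2 ≤ 2 * (N * L) * (∑ i, f i m - ∑ i, f i z) := by
    refine norm_sq_le_of_forall_le_add_inner_add_sq (g := fun y => ∑ i, f i y) (by positivity)
      hmin fun y => ?_
    calc ∑ i, f i y ≤ ∑ i, (f i m + ⟪gradient (f i) m, y - m⟫ + L / 2 * ‖y - m‖ ^ 2) :=
          sum_le_sum fun i _ => le_add_inner_gradient_add_sq (hf i) (hLip i) m y
      _ = _ := by
          simp only [sum_add_distrib, ← sum_inner, sum_const, card_univ, nsmul_eq_mul]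
          ring
  calc _ = ‖∑ i, (gradient (f i) (xs i) - gradient (f i) m) + ∑ i, gradient (f i) m‖ ^ 2 := by
        rw [sum_sub_distrib, sub_add_cancel]
    _ ≤ _ := norm_add_sq_le_two_mul _ _
    _ ≤ _ := by rw [← sum_sub_distrib] at hat_m; linarith

end Family

end InnerProduct

theorem hdo_mean_contraction_general (d n : ℕ) (hn : 1 ≤ n) (η ℓ L : ℝ)
    (hη : 0 < η) (hℓ : 0 < ℓ) (hL : 0 < L)
    (fi : Fin n → EuclideanSpace ℝ (Fin d) → ℝ)
    (hfi : ∀ i, Differentiable ℝ (fi i))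
    (hsc' : ∀ i x y, fi i y + ⟪gradient (fi i) y, x - y⟫ + ℓ / 2 * ‖x - y‖ ^ 2 ≤ fi i x)
    (hLipfi : ∀ i x y, ‖gradient (fi i) x - gradient (fi i) y‖ ≤ L * ‖x - y‖)
    (f : EuclideanSpace ℝ (Fin d) → ℝ) (hf : ∀ x, f x = (n : ℝ)⁻¹ * ∑ i, fi i x)
    (xstar : EuclideanSpace ℝ (Fin d)) (hmin : ∀ y, f xstar ≤ f y)
    (xs : Fin n → EuclideanSpace ℝ (Fin d)) :
    let μ : EuclideanSpace ℝ (Fin d) := (n : ℝ)⁻¹ • ∑ i, xs i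
    let Γ : ℝ := (n : ℝ)⁻¹ * ∑ i, ‖xs i - μ‖ ^ 2
    ‖μ - xstar - (2 * η / (n : ℝ) ^ 2) • ∑ i, gradient (fi i) (xs i)‖ ^ 2
      ≤ (1 - ℓ * η / (n : ℝ)) * ‖μ - xstar‖ ^ 2
        - (4 * η / (n : ℝ) - 16 * L * η ^ 2 / (n : ℝ) ^ 2) * (f μ - f xstar)
        + (2 * (L + ℓ) * η / (n : ℝ) + 8 * L ^ 2 * η ^ 2 / (n : ℝ) ^ 2) * Γ := by
  intro μ Γ
  have hN : (n : ℝ) ≠ 0 := by positivity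
  have hsum (x) : ∑ i, fi i x = n * f x := by rw [hf, mul_inv_cancel_left₀ hN]
  have : Nonempty (Fin n) := ⟨⟨0, hn⟩⟩
  have hA := sum_sub_add_le_inner_sum_gradient hℓ.le hfi hsc' hLipfi xs μ xstar
  have hB := norm_sum_gradient_sq_le hL hfi hLipfi
    (fun y => by rw [hsum, hsum]; gcongr; exact hmin y) xs μ
  rw [sum_sub_distrib, hsum, hsum, Fintype.card_fin] at hA hB
  set S := ∑ i, gradient (fi i) (xs i)
  set c := 2 * η / (n : ℝ) ^ 2
  calc ‖μ - xstar - c • S‖ ^ 2 = ‖μ - xstar‖ ^ 2 - 2 * c * ⟪S, μ - xstar⟫ + c ^ 2 * ‖S‖ ^ 2 := by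
        rw [norm_sub_sq_real, real_inner_smul_right, norm_smul, Real.norm_eq_abs, mul_pow, sq_abs,
          real_inner_comm]
        ring
    _ ≤ ‖μ - xstar‖ ^ 2 - 2 * c * (n * f μ - n * f xstar + n * (ℓ / 4) * ‖μ - xstar‖ ^ 2
          - (L + ℓ) / 2 * ∑ i, ‖xs i - μ‖ ^ 2)
        + c ^ 2 * (2 * n * L ^ 2 * ∑ i, ‖xs i - μ‖ ^ 2 + 4 * n * L * (n * f μ - n * f xstar)) := by
        gcongr
    _ = _ := by
        simp only [Γ, c]
        field_simp
        ring

/-- One-step contraction of the distance of the average model to the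
optimum under exact local gradients, in the strongly convex case:
`‖μ − x* − (2η/n²)∑_i ∇f^i(x_i)‖² ≤ (1 − ℓη/n)‖μ − x*‖²
  − (4η/n − 16Lη²/n²)(f(μ) − f(x*)) + (2(L+ℓ)η/n + 8L²η²/n²) Γ`. -/
theorem hdo_mean_contraction (d n : ℕ) (hn : 1 ≤ n) (η ℓ L : ℝ)
    (hη : 0 < η) (hℓ : 0 < ℓ) (hL : 0 < L) (hℓL : ℓ ≤ L)
    (fi : Fin n → EuclideanSpace ℝ (Fin d) → ℝ)
    (hfi : ∀ i, Differentiable ℝ (fi i))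
    (hsc : ∀ i x y, ℓ * ‖x - y‖ ^ 2 ≤ ⟪x - y, gradient (fi i) x - gradient (fi i) y⟫)
    (hsc' : ∀ i x y, fi i y + ⟪gradient (fi i) y, x - y⟫ + ℓ / 2 * ‖x - y‖ ^ 2 ≤ fi i x)
    (hLipfi : ∀ i x y, ‖gradient (fi i) x - gradient (fi i) y‖ ≤ L * ‖x - y‖)
    (f : EuclideanSpace ℝ (Fin d) → ℝ) (hf : ∀ x, f x = (n : ℝ)⁻¹ * ∑ i, fi i x)
    (xstar : EuclideanSpace ℝ (Fin d)) (hmin : ∀ y, f xstar ≤ f y)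
    (xs : Fin n → EuclideanSpace ℝ (Fin d)) :
    let μ : EuclideanSpace ℝ (Fin d) := (n : ℝ)⁻¹ • ∑ i, xs i
    let Γ : ℝ := (n : ℝ)⁻¹ * ∑ i, ‖xs i - μ‖ ^ 2
    ‖μ - xstar - (2 * η / (n : ℝ) ^ 2) • ∑ i, gradient (fi i) (xs i)‖ ^ 2
      ≤ (1 - ℓ * η / (n : ℝ)) * ‖μ - xstar‖ ^ 2
        - (4 * η / (n : ℝ) - 16 * L * η ^ 2 / (n : ℝ) ^ 2) * (f μ - f xstar)
        + (2 * (L + ℓ) * η / (n : ℝ) + 8 * L ^ 2 * η ^ 2 / (n : ℝ) ^ 2) * Γ :=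
  hdo_mean_contraction_general d n hn η ℓ L hη hℓ hL fi hfi hsc' hLipfi f hf xstar hmin xs
end

section
/- Let n ≥ 1, ℓ > 0, L > 0. Let f^1, …, f^n : ℝ^d → ℝ be differentiable, each ℓ-strongly convex and with L-Lipschitz gradient, and set f = (1/n)∑_i f^i, with x* the minimizer of f. Then for any points x_1, …, x_n ∈ ℝ^d with mean μ = (1/n)∑_i x_i, one has ⟨μ − x*, (1/n)∑_{i=1}^n ∇f^i(x_i)⟩ ≥ (f(μ) − f(x*)) − ((L+ℓ)/(2n))∑_{i=1}^n ‖x_i − μ‖² + (ℓ/4)‖μ − x*‖². -/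
open Finset RealInnerProductSpace

lemma hdo_descent {d : ℕ} (L : ℝ) (f : EuclideanSpace ℝ (Fin d) → ℝ)
    (hf : Differentiable ℝ f)
    (hlip : ∀ x y, ‖gradient f x - gradient f y‖ ≤ L * ‖x - y‖)
    (x y : EuclideanSpace ℝ (Fin d)) :
    f y ≤ f x + ⟪gradient f x, y - x⟫ + L / 2 * ‖y - x‖ ^ 2 := by
  set v := y - x with hv
  set φ : ℝ → ℝ := fun t => f x + t * ⟪gradient f x, v⟫ + L / 2 * t ^ 2 * ‖v‖ ^ 2
      - f (x + t • v) with hφ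
  have hder : ∀ t : ℝ, HasDerivAt (fun t : ℝ => f (x + t • v))
      ⟪gradient f (x + t • v), v⟫ t := by
    intro t
    have h1 : HasDerivAt (fun t : ℝ => x + t • v) v t := by
      simpa using (hasDerivAt_id t |>.smul_const v).const_add x
    have h2 := ((hf (x + t • v)).hasGradientAt.hasFDerivAt).comp_hasDerivAt t h1
    simp at h2 ⊢
    exact h2
  have hderφ : ∀ t : ℝ, HasDerivAt φ
      (⟪gradient f x, v⟫ + L / 2 * (2 * t) * ‖v‖ ^ 2 - ⟪gradient f (x + t • v), v⟫) t := by
    intro t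
    have h1 : HasDerivAt (fun t : ℝ => f x + t * ⟪gradient f x, v⟫ + L / 2 * t ^ 2 * ‖v‖ ^ 2)
        (⟪gradient f x, v⟫ + L / 2 * (2 * t) * ‖v‖ ^ 2) t := by
      have ha : HasDerivAt (fun t : ℝ => t * ⟪gradient f x, v⟫) ⟪gradient f x, v⟫ t := by
        simpa using (hasDerivAt_id t).mul_const ⟪gradient f x, v⟫
      have hb : HasDerivAt (fun t : ℝ => L / 2 * t ^ 2 * ‖v‖ ^ 2) (L / 2 * (2 * t) * ‖v‖ ^ 2) t := by
        have := ((hasDerivAt_pow 2 t).const_mul (L / 2)).mul_const (‖v‖ ^ 2)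
        simpa [mul_comm, mul_assoc, mul_left_comm] using this
      have h3 := (ha.const_add (f x)).add hb
      simp at h3 ⊢
      exact h3
    exact h1.sub (hder t)
  have hmono : MonotoneOn φ (Set.Icc (0:ℝ) 1) := by
    apply monotoneOn_of_deriv_nonneg (convex_Icc 0 1)
    · exact fun t _ => ((hderφ t).continuousAt).continuousWithinAt
    · intro t ht
      exact ((hderφ t).differentiableAt).differentiableWithinAt
    · intro t ht
      rw [(hderφ t).deriv]
      rw [interior_Icc] at ht
      have hineq : ⟪gradient f (x + t • v), v⟫ - ⟪gradient f x, v⟫ ≤ L * t * ‖v‖ ^ 2 := by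
        have := hlip (x + t • v) x
        have hcs : ⟪gradient f (x + t • v) - gradient f x, v⟫ ≤
            ‖gradient f (x + t • v) - gradient f x‖ * ‖v‖ :=
          real_inner_le_norm _ _
        rw [inner_sub_left] at hcs
        have hn : ‖x + t • v - x‖ = t * ‖v‖ := by
          simp [norm_smul, abs_of_nonneg ht.1.le]
        rw [hn] at this
        nlinarith [norm_nonneg v, norm_nonneg (gradient f (x + t • v) - gradient f x)]
      nlinarith
  have h01 := hmono (Set.left_mem_Icc.2 zero_le_one) (Set.right_mem_Icc.2 zero_le_one) zero_le_one
  have ev : x + v = y := by simp [hv]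
  have h0 : φ 0 = 0 := by simp [hφ]
  have h1 : φ 1 = f x + ⟪gradient f x, v⟫ + L / 2 * ‖v‖ ^ 2 - f y := by
    simp only [hφ]; rw [one_smul, ev]; ring
  rw [h0, h1] at h01
  linarith

/-- The key inner-product lower bound (quantity `R₂`) of the strongly
convex per-step analysis:
`⟨μ − x*, (1/n)∑_i ∇f^i(x_i)⟩
  ≥ (f(μ) − f(x*)) − ((L+ℓ)/(2n))∑_i ‖x_i − μ‖² + (ℓ/4)‖μ − x*‖²`. -/
theorem hdo_inner_product_lower_bound (d n : ℕ) (hn : 1 ≤ n) (ℓ L : ℝ)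
    (hℓ : 0 < ℓ) (hL : 0 < L)
    (fi : Fin n → EuclideanSpace ℝ (Fin d) → ℝ)
    (hfi : ∀ i, Differentiable ℝ (fi i))
    (hsc : ∀ i x y, fi i y + ⟪gradient (fi i) y, x - y⟫ + ℓ / 2 * ‖x - y‖ ^ 2 ≤ fi i x)
    (hLipfi : ∀ i x y, ‖gradient (fi i) x - gradient (fi i) y‖ ≤ L * ‖x - y‖)
    (f : EuclideanSpace ℝ (Fin d) → ℝ) (hf : ∀ x, f x = (n : ℝ)⁻¹ * ∑ i, fi i x)
    (xstar : EuclideanSpace ℝ (Fin d)) (hmin : ∀ y, f xstar ≤ f y)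
    (xs : Fin n → EuclideanSpace ℝ (Fin d)) :
    let μ : EuclideanSpace ℝ (Fin d) := (n : ℝ)⁻¹ • ∑ i, xs i
    f μ - f xstar - (L + ℓ) / (2 * (n : ℝ)) * ∑ i, ‖xs i - μ‖ ^ 2
        + ℓ / 4 * ‖μ - xstar‖ ^ 2
      ≤ ⟪μ - xstar, (n : ℝ)⁻¹ • ∑ i, gradient (fi i) (xs i)⟫ := by
  intro μ
  have hN : (0 : ℝ) < (n : ℝ) := by exact_mod_cast hn.trans_lt' (by norm_num)
  -- per-index bound
  have key : ∀ i, fi i μ - fi i xstar + ℓ / 4 * ‖μ - xstar‖ ^ 2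
      - (L + ℓ) / 2 * ‖xs i - μ‖ ^ 2 ≤ ⟪μ - xstar, gradient (fi i) (xs i)⟫ := by
    intro i
    have A := hsc i xstar (xs i)
    have B := hdo_descent L (fi i) (hfi i) (hLipfi i) (xs i) μ
    have hsplit : ⟪μ - xstar, gradient (fi i) (xs i)⟫
        = ⟪gradient (fi i) (xs i), μ - xs i⟫ - ⟪gradient (fi i) (xs i), xstar - xs i⟫ := by
      rw [real_inner_comm, ← inner_sub_right]
      congr 1
      abel
    have htri : ‖μ - xstar‖ ≤ ‖μ - xs i‖ + ‖xs i - xstar‖ :=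
      norm_sub_le_norm_sub_add_norm_sub μ (xs i) xstar
    have hC : ‖μ - xstar‖ ^ 2 ≤ 2 * ‖μ - xs i‖ ^ 2 + 2 * ‖xs i - xstar‖ ^ 2 := by
      have h2 := pow_le_pow_left₀ (norm_nonneg (μ - xstar)) htri 2
      nlinarith [sq_nonneg (‖μ - xs i‖ - ‖xs i - xstar‖)]
    have hrev : ‖μ - xs i‖ = ‖xs i - μ‖ := norm_sub_rev _ _
    have hrev2 : ‖xstar - xs i‖ = ‖xs i - xstar‖ := norm_sub_rev _ _
    rw [hrev] at hC
    have hC' : ℓ / 4 * ‖μ - xstar‖ ^ 2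
        ≤ ℓ / 2 * ‖xs i - μ‖ ^ 2 + ℓ / 2 * ‖xs i - xstar‖ ^ 2 := by
      nlinarith [hℓ.le]
    rw [hrev] at B
    rw [hrev2] at A
    rw [hsplit]
    linarith
  have hsum := Finset.sum_le_sum (fun i (_ : i ∈ Finset.univ) => key i)
  have hrhs : ⟪μ - xstar, (n : ℝ)⁻¹ • ∑ i, gradient (fi i) (xs i)⟫
      = (n : ℝ)⁻¹ * ∑ i, ⟪μ - xstar, gradient (fi i) (xs i)⟫ := by
    rw [real_inner_smul_right, inner_sum]
  have hexp : ∑ i, (fi i μ - fi i xstar + ℓ / 4 * ‖μ - xstar‖ ^ 2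
        - (L + ℓ) / 2 * ‖xs i - μ‖ ^ 2)
      = ∑ i, fi i μ - ∑ i, fi i xstar + (n : ℝ) * (ℓ / 4 * ‖μ - xstar‖ ^ 2)
        - (L + ℓ) / 2 * ∑ i, ‖xs i - μ‖ ^ 2 := by
    rw [Finset.sum_sub_distrib, Finset.sum_add_distrib, Finset.sum_sub_distrib,
      Finset.sum_const, Finset.mul_sum]
    simp [mul_comm]
  rw [hexp] at hsum
  have hmul := mul_le_mul_of_nonneg_left hsum (inv_nonneg.2 hN.le)
  rw [hrhs]
  have hLHS : f μ - f xstar - (L + ℓ) / (2 * (n : ℝ)) * ∑ i, ‖xs i - μ‖ ^ 2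
        + ℓ / 4 * ‖μ - xstar‖ ^ 2
      = (n : ℝ)⁻¹ * (∑ i, fi i μ - ∑ i, fi i xstar + (n : ℝ) * (ℓ / 4 * ‖μ - xstar‖ ^ 2)
        - (L + ℓ) / 2 * ∑ i, ‖xs i - μ‖ ^ 2) := by
    rw [hf, hf]
    field_simp
    ring
  rw [hLHS]
  exact hmul
end

section
/- Let n ≥ 1 be an integer, ℓ > 0, and 0 < η ≤ 1/(10ℓ). Let (a_t)_{t ≥ 0}, (P_t)_{t ≥ 0} be sequences of nonnegative reals and Q ≥ 0, with a_0 = 0 and a_{t+1} ≤ (1 − 1/(4n)) a_t + P_t + Q for all t ≥ 0. Define weights w_t = (1 − ηℓ/(2n))^{−t}. Then for every integer T ≥ 1, ∑_{t=1}^{T} w_t a_{t−1} ≤ 5n ∑_{t=1}^{T−1} w_t (P_{t−1} + Q). -/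
open Finset

/-- Weighted-sum unrolling lemma for the variance potential in the
strongly convex analysis: if `a₀ = 0` and
`a_{t+1} ≤ (1 − 1/(4n)) a_t + P_t + Q`, then, with weights `w_t = (1 − ηℓ/(2n))^{−t}` and
`0 < η ≤ 1/(10ℓ)`, one has `∑_{t=1}^T w_t a_{t−1} ≤ 5n ∑_{t=1}^{T−1} w_t (P_{t−1} + Q)`. -/
theorem hdo_weighted_unrolling (n : ℕ) (hn : 1 ≤ n) (ℓ η : ℝ) (hℓ : 0 < ℓ)
    (hη0 : 0 < η) (hη : η ≤ 1 / (10 * ℓ))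
    (a P : ℕ → ℝ) (Q : ℝ) (ha : ∀ t, 0 ≤ a t) (hP : ∀ t, 0 ≤ P t) (hQ : 0 ≤ Q)
    (ha0 : a 0 = 0)
    (hrec : ∀ t, a (t + 1) ≤ (1 - 1 / (4 * (n : ℝ))) * a t + P t + Q)
    (T : ℕ) (hT : 1 ≤ T) :
    ∑ t ∈ Finset.Icc 1 T, (1 - η * ℓ / (2 * (n : ℝ))) ^ (-(t : ℤ)) * a (t - 1)
      ≤ 5 * (n : ℝ) *
        ∑ t ∈ Finset.Icc 1 (T - 1),
          (1 - η * ℓ / (2 * (n : ℝ))) ^ (-(t : ℤ)) * (P (t - 1) + Q) := by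
  have hnR : (1:ℝ) ≤ (n:ℝ) := by exact_mod_cast hn
  set x : ℝ := η * ℓ with hxdef
  have hx0 : 0 < x := mul_pos hη0 hℓ
  have hx1 : x ≤ 1/10 := by
    have h10 : (0:ℝ) < 10 * ℓ := by linarith
    have := (le_div_iff₀ h10).mp hη
    nlinarith
  set nR : ℝ := (n:ℝ) with hnRdef
  set q : ℝ := 1 - x / (2 * nR) with hqdef
  set ρ : ℝ := 1 - 1 / (4 * nR) with hρdef
  have hnR0 : 0 < nR := by linarith
  have hq0 : 0 < q := by
    have h2 : x / (2 * nR) ≤ x / 2 :=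
      div_le_div_of_nonneg_left hx0.le (by norm_num) (by nlinarith)
    rw [hqdef]; nlinarith
  have hd : 0 < q - ρ := by
    have : q - ρ = (1/4 - x/2) / nR := by rw [hqdef, hρdef]; field_simp; ring
    rw [this]
    apply div_pos (by linarith) hnR0
  have hρ0 : 0 ≤ ρ := by
    have : 1 / (4 * nR) ≤ 1 / (4 * 1) := by
      apply div_le_div_of_nonneg_left (by norm_num) (by norm_num) (by nlinarith)
    rw [hρdef]; nlinarith
  set K : ℝ := ρ / (q - ρ) with hKdef
  have hK0 : 0 ≤ K := div_nonneg hρ0 hd.le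
  have hKρ : K * (q - ρ) = ρ := div_mul_cancel₀ _ hd.ne'
  have hKq : (1 + K) * ρ = K * q := by linear_combination -hKρ
  have h1 : 1 ≤ 5 * nR * (q - ρ) := by
    have : 5 * nR * (q - ρ) = 5/4 - 5*x/2 := by
      rw [hqdef, hρdef]; field_simp; ring
    rw [this]; linarith
  have h5 : 1 + K ≤ 5 * nR * q := by
    have hK' : K ≤ 5 * nR * q - 1 := by
      rw [hKdef, div_le_iff₀ hd]
      nlinarith [mul_le_mul_of_nonneg_left h1 hq0.le]
    linarith
  have hW0 : ∀ m : ℕ, (0:ℝ) < q ^ (-(m:ℤ)) := fun m => zpow_pos hq0 _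
  have hW : ∀ m : ℕ, q ^ (-((m+1 : ℕ):ℤ)) * q = q ^ (-(m:ℤ)) := by
    intro m
    have he : (-((m+1 : ℕ):ℤ)) + 1 = -(m:ℤ) := by push_cast; ring
    calc q ^ (-((m+1 : ℕ):ℤ)) * q
        = q ^ ((-((m+1 : ℕ):ℤ)) + 1) := by rw [zpow_add₀ hq0.ne', zpow_one]
      _ = q ^ (-(m:ℤ)) := by rw [he]
  have main : ∀ m : ℕ,
      (∑ t ∈ Finset.Icc 1 (m+1), q ^ (-(t:ℤ)) * a (t - 1))
        + K * q ^ (-((m+1 : ℕ):ℤ)) * a m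
      ≤ 5 * nR * ∑ t ∈ Finset.Icc 1 m, q ^ (-(t:ℤ)) * (P (t - 1) + Q) := by
    intro m
    induction m with
    | zero =>
      simp [Finset.Icc_self, ha0]
    | succ m ih =>
      conv_lhs => rw [Finset.sum_Icc_succ_top (by omega : (1:ℕ) ≤ m+1+1)]
      conv_rhs => rw [Finset.sum_Icc_succ_top (by omega : (1:ℕ) ≤ m+1)]
      simp only [Nat.add_sub_cancel]
      have hrm := hrec m
      have hWp2 := hW0 (m+2)
      have hWp1 := hW0 (m+1)
      have hW1 : q ^ (-((m+1+1 : ℕ):ℤ)) * q = q ^ (-((m+1 : ℕ):ℤ)) := hW (m+1)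
      -- (1+K) * W(m+2) * a(m+1) ≤ (1+K) * W(m+2) * (ρ a m + P m + Q)
      have hA : (1 + K) * (q ^ (-((m+1+1 : ℕ):ℤ)) * a (m+1))
          ≤ (1 + K) * (q ^ (-((m+1+1 : ℕ):ℤ)) * (ρ * a m + P m + Q)) := by
        apply mul_le_mul_of_nonneg_left _ (by linarith)
        exact mul_le_mul_of_nonneg_left hrm (hW0 _).le
      -- (1+K) * W(m+2) * ρ * a m = K * W(m+1) * a m
      have hB : (1 + K) * (q ^ (-((m+1+1 : ℕ):ℤ)) * (ρ * a m))
          = K * (q ^ (-((m+1 : ℕ):ℤ)) * a m) := by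
        linear_combination (q ^ (-((m+1+1 : ℕ):ℤ)) * a m) * hKq
          + (K * a m) * hW1
      -- (1+K) * W(m+2) * (P m + Q) ≤ 5 nR * W(m+1) * (P m + Q)
      have hC : (1 + K) * (q ^ (-((m+1+1 : ℕ):ℤ)) * (P m + Q))
          ≤ 5 * nR * (q ^ (-((m+1 : ℕ):ℤ)) * (P m + Q)) := by
        have h6 : (1 + K) * q ^ (-((m+1+1 : ℕ):ℤ))
            ≤ 5 * nR * q ^ (-((m+1 : ℕ):ℤ)) := by
          calc (1 + K) * q ^ (-((m+1+1 : ℕ):ℤ))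
              ≤ 5 * nR * q * q ^ (-((m+1+1 : ℕ):ℤ)) :=
                mul_le_mul_of_nonneg_right h5 (hW0 _).le
            _ = 5 * nR * q ^ (-((m+1 : ℕ):ℤ)) := by rw [← hW1]; ring
        calc (1 + K) * (q ^ (-((m+1+1 : ℕ):ℤ)) * (P m + Q))
            = (1 + K) * q ^ (-((m+1+1 : ℕ):ℤ)) * (P m + Q) := by ring
          _ ≤ 5 * nR * q ^ (-((m+1 : ℕ):ℤ)) * (P m + Q) :=
              mul_le_mul_of_nonneg_right h6 (add_nonneg (hP m) hQ)
          _ = 5 * nR * (q ^ (-((m+1 : ℕ):ℤ)) * (P m + Q)) := by ring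
      linarith [ih, hA, hB, hC]
  obtain ⟨m, rfl⟩ : ∃ m, T = m + 1 := ⟨T - 1, (Nat.succ_pred_eq_of_pos hT).symm⟩
  simp only [Nat.add_sub_cancel]
  have hnn : 0 ≤ K * q ^ (-((m+1 : ℕ):ℤ)) * a m :=
    mul_nonneg (mul_nonneg hK0 (hW0 _).le) (ha m)
  linarith [main m]
end
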